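/- arXiv:math/0703631 — 8 statements merged into one kernel-verified Lean document; each statement's English description precedes it below -/
import Mathlib

section
/- Let L be an n-dimensional complex vector space with basis y₁,…,yₙ (n ≥ 4) equipped with the bilinear bracket defined by [yᵢ,y₁] = y_{i+1} for 1 ≤ i ≤ n-2, [yᵢ,yₙ] = y_{k+i-1} for 1 ≤ i ≤ n-k, where 3 ≤ k ≤ n-1, and all other products of basis vectors equal to zero. Then L is a Leibniz algebra, i.e., the bracket satisfies [x,[y,z]] = [[x,y],z] - [[x,z],y]. -/
/-!
Every product of two basis vectors is either `0` or a vector `y m` with `1 < m < n`, and such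
vectors annihilate everything from the right; hence `[x, [u, z]] = 0`. Writing `ρ w` for right
multiplication by `w`, the right-hand side of the identity is `(ρ z ρ u - ρ u ρ z) x`. The only
right multiplications not vanishing on the basis are `ρ y₁` and `ρ yₙ`, and they commute: both
composites send `y a` to `y (a + k)` when `a + k < n` and to `0` otherwise.
-/

open Submodule

theorem LinearMap.ext_on_range₂ {R M M' N ι ι' : Type*} [CommSemiring R] [AddCommMonoid M]
    [Module R M] [AddCommMonoid M'] [Module R M'] [AddCommMonoid N] [Module R N]
    {v : ι → M} {w : ι' → M'} (hv : span R (Set.range v) = ⊤) (hw : span R (Set.range w) = ⊤)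
    {f g : M →ₗ[R] M' →ₗ[R] N} (h : ∀ i j, f (v i) (w j) = g (v i) (w j)) : f = g :=
  ext_on_range hv fun i => ext_on_range hw (h i)

theorem LinearMap.commute_of_span_eq_top {R M A ι : Type*} [CommSemiring R] [AddCommMonoid M]
    [Module R M] [Semiring A] [Algebra R A] (f : M →ₗ[R] A) {v : ι → M}
    (hv : span R (Set.range v) = ⊤) (h : ∀ i j, Commute (f (v i)) (f (v j))) (u z : M) :
    Commute (f u) (f z) := by
  have hmul : (LinearMap.mul R A).compl₁₂ f f = ((LinearMap.mul R A).compl₁₂ f f).flip :=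
    ext_on_range₂ hv hv fun i j => (h i j).eq
  exact LinearMap.congr_fun₂ hmul u z

theorem LinearMap.leibniz_of_flip {R M : Type*} [CommRing R] [AddCommGroup M] [Module R M]
    (B : M →ₗ[R] M →ₗ[R] M) (hann : ∀ u z, B.flip (B u z) = 0)
    (hcomm : ∀ u z, Commute (B.flip u) (B.flip z)) (x u z : M) :
    B x (B u z) = B (B x u) z - B (B x z) u := by
  have hleft : B x (B u z) = 0 := LinearMap.congr_fun (hann u z) x
  have hright : B (B x u) z = B (B x z) u := LinearMap.congr_fun (hcomm z u).eq x
  rw [hleft, hright, sub_self]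

structure IsM1kTable {R M : Type*} [CommRing R] [AddCommGroup M] [Module R M] (n k : ℕ)
    (y : ℕ → M) (B : M →ₗ[R] M →ₗ[R] M) : Prop where
  mul_one : ∀ i, 1 ≤ i → i ≤ n - 2 → B (y i) (y 1) = y (i + 1)
  mul_last : ∀ i, 1 ≤ i → i ≤ n - k → B (y i) (y n) = y (k + i - 1)
  mul_eq_zero : ∀ i j, 1 ≤ i → i ≤ n → 1 ≤ j → j ≤ n →
    ¬(j = 1 ∧ i ≤ n - 2) → ¬(j = n ∧ i ≤ n - k) → B (y i) (y j) = 0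

namespace IsM1kTable

variable {R M : Type*} [CommRing R] [AddCommGroup M] [Module R M] {n k : ℕ} {y : ℕ → M}
  {B : M →ₗ[R] M →ₗ[R] M}

theorem mul_middle (hB : IsM1kTable n k y B) {i m : ℕ} (hi : 1 ≤ i) (hi' : i ≤ n) (hm : 1 < m)
    (hm' : m < n) : B (y i) (y m) = 0 :=
  hB.mul_eq_zero i m hi hi' hm.le hm'.le (fun h => by omega) (fun h => by omega)

theorem flip_middle (hB : IsM1kTable n k y B)
    (hspan : span R (Set.range fun i : Fin n => y (i.val + 1)) = ⊤) {m : ℕ} (hm : 1 < m)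
    (hm' : m < n) : B.flip (y m) = 0 :=
  LinearMap.ext_on_range hspan fun i => hB.mul_middle (by omega) (by omega) hm hm'

theorem mul_eq_zero_or_middle (hB : IsM1kTable n k y B) (hk : 2 ≤ k) {b c : ℕ} (hb : 1 ≤ b)
    (hb' : b ≤ n) (hc : 1 ≤ c) (hc' : c ≤ n) :
    B (y b) (y c) = 0 ∨ ∃ m, 1 < m ∧ m < n ∧ B (y b) (y c) = y m := by
  by_cases hone : c = 1 ∧ b ≤ n - 2
  · obtain ⟨rfl, hb2⟩ := hone
    exact Or.inr ⟨b + 1, by omega, by omega, hB.mul_one b hb hb2⟩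
  by_cases hlast : c = n ∧ b ≤ n - k
  · obtain ⟨rfl, hbk⟩ := hlast
    exact Or.inr ⟨k + b - 1, by omega, by omega, hB.mul_last b hb hbk⟩
  exact Or.inl (hB.mul_eq_zero b c hb hb' hc hc' hone hlast)

theorem flip_mul_eq_zero (hB : IsM1kTable n k y B) (hk : 2 ≤ k)
    (hspan : span R (Set.range fun i : Fin n => y (i.val + 1)) = ⊤) (u z : M) :
    B.flip (B u z) = 0 := by
  have hzero : B.compr₂ B.flip = 0 := LinearMap.ext_on_range₂ hspan hspan fun i j => by
    rcases hB.mul_eq_zero_or_middle hk (b := i.val + 1) (c := j.val + 1) (by omega) (by omega)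
      (by omega) (by omega) with h | ⟨m, hm, hm', h⟩
    · simp [h]
    · simp [h, hB.flip_middle hspan hm hm']
  exact LinearMap.congr_fun₂ hzero u z

theorem mul_one_mul_last (hB : IsM1kTable n k y B) (hk : 2 ≤ k) {a : ℕ} (ha : 1 ≤ a)
    (ha' : a ≤ n) : B (B (y a) (y 1)) (y n) = B (B (y a) (y n)) (y 1) := by
  by_cases hsmall : a + k < n
  · rw [hB.mul_one a ha (by omega), hB.mul_last (a + 1) (by omega) (by omega),
      hB.mul_last a ha (by omega), hB.mul_one (k + a - 1) (by omega) (by omega)]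
    congr 1
    omega
  by_cases hedge : a ≤ n - k
  · rw [hB.mul_one a ha (by omega), hB.mul_last a ha hedge,
      hB.mul_eq_zero (a + 1) n (by omega) (by omega) (by omega) le_rfl (by omega) (by omega),
      hB.mul_eq_zero (k + a - 1) 1 (by omega) (by omega) le_rfl (by omega) (by omega) (by omega)]
  rw [hB.mul_eq_zero a n ha ha' (by omega) le_rfl (by omega) (fun h => hedge h.2), map_zero,
    LinearMap.zero_apply]
  by_cases hone : a ≤ n - 2
  · rw [hB.mul_one a ha hone,
      hB.mul_eq_zero (a + 1) n (by omega) (by omega) (by omega) le_rfl (by omega) (by omega)]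
  · rw [hB.mul_eq_zero a 1 ha ha' le_rfl (by omega) (fun h => hone h.2) (by omega), map_zero,
      LinearMap.zero_apply]

theorem commute_flip_one_last (hB : IsM1kTable n k y B) (hk : 2 ≤ k)
    (hspan : span R (Set.range fun i : Fin n => y (i.val + 1)) = ⊤) :
    Commute (B.flip (y 1)) (B.flip (y n)) :=
  LinearMap.ext_on_range hspan fun i => (hB.mul_one_mul_last hk (by omega) (by omega)).symm

theorem commute_flip (hB : IsM1kTable n k y B) (hk : 2 ≤ k)
    (hspan : span R (Set.range fun i : Fin n => y (i.val + 1)) = ⊤) (u z : M) :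
    Commute (B.flip u) (B.flip z) := by
  refine B.flip.commute_of_span_eq_top hspan (fun i j => ?_) u z
  generalize hb : i.val + 1 = b
  generalize hc : j.val + 1 = c
  by_cases hbm : 1 < b ∧ b < n
  · rw [hB.flip_middle hspan hbm.1 hbm.2]
    exact Commute.zero_left _
  by_cases hcm : 1 < c ∧ c < n
  · rw [hB.flip_middle hspan hcm.1 hcm.2]
    exact Commute.zero_right _
  have hb' : b = 1 ∨ b = n := by omega
  have hc' : c = 1 ∨ c = n := by omega
  rcases hb' with hb1 | hbn <;> rcases hc' with hc1 | hcn
  · rw [hb1, hc1]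
    exact Commute.refl _
  · rw [hb1, hcn]
    exact hB.commute_flip_one_last hk hspan
  · rw [hbn, hc1]
    exact (hB.commute_flip_one_last hk hspan).symm
  · rw [hbn, hcn]
    exact Commute.refl _

end IsM1kTable

theorem M1k_is_Leibniz_general
    (n k : ℕ) (hk3 : 3 ≤ k)
    (V : Type*) [AddCommGroup V] [Module ℂ V]
    (y : ℕ → V)
    (hspan : Submodule.span ℂ (Set.range (fun i : Fin n => y (i.val + 1))) = ⊤)
    (B : V →ₗ[ℂ] V →ₗ[ℂ] V)
    (h1 : ∀ i, 1 ≤ i → i ≤ n - 2 → B (y i) (y 1) = y (i + 1))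
    (h2 : ∀ i, 1 ≤ i → i ≤ n - k → B (y i) (y n) = y (k + i - 1))
    (h0 : ∀ i j, 1 ≤ i → i ≤ n → 1 ≤ j → j ≤ n →
      ¬(j = 1 ∧ i ≤ n - 2) → ¬(j = n ∧ i ≤ n - k) → B (y i) (y j) = 0) :
    ∀ x u z : V, B x (B u z) = B (B x u) z - B (B x z) u := by
  have hB : IsM1kTable n k y B := ⟨h1, h2, h0⟩
  have hk : 2 ≤ k := by omega
  exact B.leibniz_of_flip (hB.flip_mul_eq_zero hk hspan) (hB.commute_flip hk hspan)

/-- The algebra M₁(k): basis y₁,…,yₙ (n ≥ 4), [yᵢ,y₁] = y_{i+1} for 1 ≤ i ≤ n-2,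
[yᵢ,yₙ] = y_{k+i-1} for 1 ≤ i ≤ n-k (3 ≤ k ≤ n-1), all other products of basis
vectors zero.  This bracket satisfies the Leibniz identity. -/
theorem M1k_is_Leibniz
    (n k : ℕ) (hn : 4 ≤ n) (hk3 : 3 ≤ k) (hkn : k ≤ n - 1)
    (V : Type*) [AddCommGroup V] [Module ℂ V]
    (y : ℕ → V)
    (hindep : LinearIndependent ℂ (fun i : Fin n => y (i.val + 1)))
    (hspan : Submodule.span ℂ (Set.range (fun i : Fin n => y (i.val + 1))) = ⊤)
    (B : V →ₗ[ℂ] V →ₗ[ℂ] V)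
    (h1 : ∀ i, 1 ≤ i → i ≤ n - 2 → B (y i) (y 1) = y (i + 1))
    (h2 : ∀ i, 1 ≤ i → i ≤ n - k → B (y i) (y n) = y (k + i - 1))
    (h0 : ∀ i j, 1 ≤ i → i ≤ n → 1 ≤ j → j ≤ n →
      ¬(j = 1 ∧ i ≤ n - 2) → ¬(j = n ∧ i ≤ n - k) → B (y i) (y j) = 0) :
    ∀ x u z : V, B x (B u z) = B (B x u) z - B (B x z) u :=
  M1k_is_Leibniz_general n k hk3 V y hspan B h1 h2 h0
end

section
/- Let n be odd and let L be an n-dimensional complex vector space with basis y₁,…,yₙ equipped with the bracket [yᵢ,y₁] = y_{i+1} for 1 ≤ i ≤ n-2, [yᵢ,yₙ] = y_{(n+1)/2 + i - 1} for 1 ≤ i ≤ (n-1)/2, [yₙ,yₙ] = α·y_{n-1} with α ≠ 0, all other products of basis vectors being zero. Then L is a Leibniz algebra. -/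
/-!
Every product of two basis vectors is a multiple of some `y t` with `2 ≤ t ≤ n - 1`, and
`[yᵢ, y t] = 0` for every such `t`, so `[x, [u, z]] = 0` identically. The Leibniz
identity therefore reduces to the symmetry of `[[x, u], z]` in `u` and `z`. On basis vectors this
is only in question for `{u, z} = {y₁, yₙ}`, and writing `n = 2m + 1` both `[[yᵢ, y₁], yₙ]` and
`[[yᵢ, yₙ], y₁]` equal `y (m + i + 1)` for `i < m` and vanish otherwise.
-/

open Submodule

theorem LinearMap.leibniz_of_span_eq_top {R V : Type*} [CommSemiring R] [AddCommGroup V]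
    [Module R V] (B : V →ₗ[R] V →ₗ[R] V) {s : Set V} (hs : span R s = ⊤)
    (h : ∀ x ∈ s, ∀ u ∈ s, ∀ z ∈ s, B x (B u z) = B (B x u) z - B (B x z) u) (x u z : V) :
    B x (B u z) = B (B x u) z - B (B x z) u := by
  have hz : ∀ x ∈ s, ∀ u ∈ s, ∀ z, B x (B u z) = B (B x u) z - B (B x z) u := by
    intro x hx u hu z
    have := LinearMap.ext_on hs (f := B x ∘ₗ B u) (g := B (B x u) - B.flip u ∘ₗ B x)
      fun z hz => by simpa using h x hx u hu z hz
    simpa using LinearMap.congr_fun this z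
  have huz : ∀ x ∈ s, ∀ u z, B x (B u z) = B (B x u) z - B (B x z) u := by
    intro x hx u z
    have := LinearMap.ext_on hs (f := B x ∘ₗ B.flip z) (g := B.flip z ∘ₗ B x - B (B x z))
      fun u hu => by simpa using hz x hx u hu z
    simpa using LinearMap.congr_fun this u
  have := LinearMap.ext_on hs (f := B.flip (B u z))
    (g := B.flip z ∘ₗ B.flip u - B.flip u ∘ₗ B.flip z) fun x hx => by simpa using huz x hx u z
  simpa using LinearMap.congr_fun this x

structure IsM2Bracket {R V : Type*} [CommSemiring R] [AddCommGroup V] [Module R V]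
    (n : ℕ) (y : ℕ → V) (α : R) (B : V →ₗ[R] V →ₗ[R] V) : Prop where
  bracket_one : ∀ i, 1 ≤ i → i ≤ n - 2 → B (y i) (y 1) = y (i + 1)
  bracket_last : ∀ i, 1 ≤ i → i ≤ (n - 1) / 2 → B (y i) (y n) = y ((n + 1) / 2 + i - 1)
  last_bracket_last : B (y n) (y n) = α • y (n - 1)
  bracket_eq_zero : ∀ i j, 1 ≤ i → i ≤ n → 1 ≤ j → j ≤ n →
    ¬(j = 1 ∧ i ≤ n - 2) → ¬(j = n ∧ i ≤ (n - 1) / 2) → ¬(i = n ∧ j = n) → B (y i) (y j) = 0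

namespace IsM2Bracket

variable {R V : Type*} [CommSemiring R] [AddCommGroup V] [Module R V]
  {n m i j k t : ℕ} {y : ℕ → V} {α : R} {B : V →ₗ[R] V →ₗ[R] V}

theorem bracket_mid (hB : IsM2Bracket n y α B) (hi₁ : 1 ≤ i) (hi : i ≤ n) (ht₁ : 2 ≤ t)
    (ht : t ≤ n - 1) : B (y i) (y t) = 0 :=
  hB.bracket_eq_zero i t hi₁ hi (by omega) (by omega) (by omega) (by omega) (by omega)

theorem exists_bracket_eq_smul_mid (hB : IsM2Bracket n y α B) (hn : 3 ≤ n) (hj₁ : 1 ≤ j)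
    (hj : j ≤ n) (hk₁ : 1 ≤ k) (hk : k ≤ n) :
    ∃ (c : R) (t : ℕ), 2 ≤ t ∧ t ≤ n - 1 ∧ B (y j) (y k) = c • y t := by
  by_cases hone : k = 1 ∧ j ≤ n - 2
  · exact ⟨1, j + 1, by omega, by omega, by rw [hone.1, hB.bracket_one j hj₁ hone.2, one_smul]⟩
  by_cases hlast : k = n ∧ j ≤ (n - 1) / 2
  · refine ⟨1, (n + 1) / 2 + j - 1, by omega, by omega, ?_⟩
    rw [hlast.1, hB.bracket_last j hj₁ hlast.2, one_smul]
  by_cases hlast_last : j = n ∧ k = n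
  · exact ⟨α, n - 1, by omega, le_rfl, by rw [hlast_last.1, hlast_last.2, hB.last_bracket_last]⟩
  · refine ⟨0, 2, le_rfl, by omega, ?_⟩
    rw [hB.bracket_eq_zero j k hj₁ hj hk₁ hk hone hlast hlast_last, zero_smul]

theorem bracket_bracket_eq_zero (hB : IsM2Bracket n y α B) (hn : 3 ≤ n) (hi₁ : 1 ≤ i)
    (hi : i ≤ n) (hj₁ : 1 ≤ j) (hj : j ≤ n) (hk₁ : 1 ≤ k) (hk : k ≤ n) :
    B (y i) (B (y j) (y k)) = 0 := by
  obtain ⟨c, t, ht₁, ht, hjk⟩ := hB.exists_bracket_eq_smul_mid hn hj₁ hj hk₁ hk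
  rw [hjk, map_smul, hB.bracket_mid hi₁ hi ht₁ ht, smul_zero]

theorem bracket_bracket_mid (hB : IsM2Bracket n y α B) (hn : 3 ≤ n) (hi₁ : 1 ≤ i)
    (hi : i ≤ n) (hj₁ : 1 ≤ j) (hj : j ≤ n) (ht₁ : 2 ≤ t) (ht : t ≤ n - 1) :
    B (B (y i) (y j)) (y t) = 0 := by
  obtain ⟨c, s, hs₁, hs, hij⟩ := hB.exists_bracket_eq_smul_mid hn hi₁ hi hj₁ hj
  rw [hij, map_smul, LinearMap.smul_apply, hB.bracket_mid (by omega) (by omega) ht₁ ht,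
    smul_zero]

theorem bracket_one_bracket_last (hB : IsM2Bracket n y α B) (hm : n = 2 * m + 1) (hm₁ : 1 ≤ m)
    (hi₁ : 1 ≤ i) (hi : i ≤ n) :
    B (B (y i) (y 1)) (y n) = if i < m then y (m + i + 1) else 0 := by
  by_cases hin : i ≤ n - 2
  · rw [hB.bracket_one i hi₁ hin]
    by_cases him : i < m
    · rw [hB.bracket_last (i + 1) (by omega) (by omega), if_pos him]
      exact congrArg y (by omega)
    · rw [hB.bracket_eq_zero (i + 1) n (by omega) (by omega) (by omega) le_rfl (by omega)
        (by omega) (by omega), if_neg him]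
  · rw [hB.bracket_eq_zero i 1 hi₁ hi le_rfl (by omega) (by omega) (by omega) (by omega),
      map_zero, LinearMap.zero_apply, if_neg (by omega)]

theorem bracket_last_bracket_one (hB : IsM2Bracket n y α B) (hm : n = 2 * m + 1) (hm₁ : 1 ≤ m)
    (hi₁ : 1 ≤ i) (hi : i ≤ n) :
    B (B (y i) (y n)) (y 1) = if i < m then y (m + i + 1) else 0 := by
  by_cases him : i ≤ m
  · rw [hB.bracket_last i hi₁ (by omega)]
    by_cases him' : i < m
    · rw [hB.bracket_one _ (by omega) (by omega), if_pos him']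
      exact congrArg y (by omega)
    · rw [hB.bracket_eq_zero _ 1 (by omega) (by omega) le_rfl (by omega) (by omega) (by omega)
        (by omega), if_neg him']
  by_cases hin : i = n
  · rw [hin, hB.last_bracket_last, map_smul, LinearMap.smul_apply,
      hB.bracket_eq_zero (n - 1) 1 (by omega) (by omega) le_rfl (by omega) (by omega) (by omega)
        (by omega), smul_zero, if_neg (by omega)]
  · rw [hB.bracket_eq_zero i n hi₁ hi (by omega) le_rfl (by omega) (by omega) (by omega),
      map_zero, LinearMap.zero_apply, if_neg (by omega)]

theorem bracket_bracket_comm (hB : IsM2Bracket n y α B) (hn : 3 ≤ n) (hodd : Odd n)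
    (hi₁ : 1 ≤ i) (hi : i ≤ n) (hj₁ : 1 ≤ j) (hj : j ≤ n) (hk₁ : 1 ≤ k) (hk : k ≤ n) :
    B (B (y i) (y j)) (y k) = B (B (y i) (y k)) (y j) := by
  obtain ⟨m, hm⟩ := hodd
  have mid : ∀ j t, 1 ≤ j → j ≤ n → 2 ≤ t → t ≤ n - 1 →
      B (B (y i) (y j)) (y t) = B (B (y i) (y t)) (y j) := fun j t hj₁ hj ht₁ ht => by
    rw [hB.bracket_bracket_mid hn hi₁ hi hj₁ hj ht₁ ht, hB.bracket_mid hi₁ hi ht₁ ht, map_zero,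
      LinearMap.zero_apply]
  have ends : B (B (y i) (y 1)) (y n) = B (B (y i) (y n)) (y 1) := by
    rw [hB.bracket_one_bracket_last hm (by omega) hi₁ hi,
      hB.bracket_last_bracket_one hm (by omega) hi₁ hi]
  rcases (by omega : j = k ∨ 2 ≤ k ∧ k ≤ n - 1 ∨ 2 ≤ j ∧ j ≤ n - 1 ∨
      j = 1 ∧ k = n ∨ j = n ∧ k = 1) with rfl | hk_mid | hj_mid | ⟨rfl, rfl⟩ | ⟨rfl, rfl⟩
  · rfl
  · exact mid j k hj₁ hj hk_mid.1 hk_mid.2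
  · exact (mid k j hk₁ hk hj_mid.1 hj_mid.2).symm
  · exact ends
  · exact ends.symm

end IsM2Bracket

theorem M2_is_Leibniz_general
    (n : ℕ) (hn : 3 ≤ n) (hodd : Odd n)
    (V : Type*) [AddCommGroup V] [Module ℂ V]
    (y : ℕ → V)
    (hspan : Submodule.span ℂ (Set.range (fun i : Fin n => y (i.val + 1))) = ⊤)
    (α : ℂ)
    (B : V →ₗ[ℂ] V →ₗ[ℂ] V)
    (h1 : ∀ i, 1 ≤ i → i ≤ n - 2 → B (y i) (y 1) = y (i + 1))
    (h2 : ∀ i, 1 ≤ i → i ≤ (n - 1) / 2 → B (y i) (y n) = y ((n + 1) / 2 + i - 1))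
    (h3 : B (y n) (y n) = α • y (n - 1))
    (h0 : ∀ i j, 1 ≤ i → i ≤ n → 1 ≤ j → j ≤ n →
      ¬(j = 1 ∧ i ≤ n - 2) → ¬(j = n ∧ i ≤ (n - 1) / 2) → ¬(i = n ∧ j = n) →
      B (y i) (y j) = 0) :
    ∀ x u z : V, B x (B u z) = B (B x u) z - B (B x z) u := by
  have hB : IsM2Bracket n y α B := ⟨h1, h2, h3, h0⟩
  intro x u z
  refine B.leibniz_of_span_eq_top hspan ?_ x u z
  rintro _ ⟨i, rfl⟩ _ ⟨j, rfl⟩ _ ⟨k, rfl⟩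
  have hi := i.isLt
  have hj := j.isLt
  have hk := k.isLt
  rw [hB.bracket_bracket_eq_zero hn (by omega) hi (by omega) hj (by omega) hk,
    hB.bracket_bracket_comm hn hodd (by omega) hi (by omega) hj (by omega) hk, sub_self]

/-- The algebra M₂ (n odd): [yᵢ,y₁] = y_{i+1} for 1 ≤ i ≤ n-2,
[yᵢ,yₙ] = y_{(n+1)/2+i-1} for 1 ≤ i ≤ (n-1)/2, [yₙ,yₙ] = α·y_{n-1} (α ≠ 0),
all other products of basis vectors zero.  This bracket satisfies the
Leibniz identity. -/
theorem M2_is_Leibniz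
    (n : ℕ) (hn : 3 ≤ n) (hodd : Odd n)
    (V : Type*) [AddCommGroup V] [Module ℂ V]
    (y : ℕ → V)
    (hindep : LinearIndependent ℂ (fun i : Fin n => y (i.val + 1)))
    (hspan : Submodule.span ℂ (Set.range (fun i : Fin n => y (i.val + 1))) = ⊤)
    (α : ℂ) (hα : α ≠ 0)
    (B : V →ₗ[ℂ] V →ₗ[ℂ] V)
    (h1 : ∀ i, 1 ≤ i → i ≤ n - 2 → B (y i) (y 1) = y (i + 1))
    (h2 : ∀ i, 1 ≤ i → i ≤ (n - 1) / 2 → B (y i) (y n) = y ((n + 1) / 2 + i - 1))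
    (h3 : B (y n) (y n) = α • y (n - 1))
    (h0 : ∀ i j, 1 ≤ i → i ≤ n → 1 ≤ j → j ≤ n →
      ¬(j = 1 ∧ i ≤ n - 2) → ¬(j = n ∧ i ≤ (n - 1) / 2) → ¬(i = n ∧ j = n) →
      B (y i) (y j) = 0) :
    ∀ x u z : V, B x (B u z) = B (B x u) z - B (B x z) u :=
  M2_is_Leibniz_general n hn hodd V y hspan α B h1 h2 h3 h0
end

section
/- Let L be an n-dimensional complex vector space with basis y₁,…,yₙ (n ≥ 3) with bracket [yᵢ,y₁] = y_{i+1} for 1 ≤ i ≤ n-2, [yₙ,yₙ] = y_{n-1}, and all other products of basis vectors zero. Then L is a Leibniz algebra satisfying the identity [x,[y,z]] = [[x,y],z] - [[x,z],y]. -/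
/-!
Every product of basis vectors lies in the span of `y₂, …, y_{n-1}`, and right multiplication by
these vectors is zero; so `[x, [u, z]] = 0` for all `x, u, z`. Moreover `[[y_a, y_b], y_c]` vanishes
unless `b = c = 1`, hence is symmetric in `b` and `c`, and the right-hand side of the identity is
zero as well. Both sides are trilinear, so checking the identity on basis vectors suffices.
-/

namespace LinearMap

variable {R V : Type*} [CommRing R] [AddCommGroup V] [Module R V]

def leibnizDefect (B : V →ₗ[R] V →ₗ[R] V) : V →ₗ[R] V →ₗ[R] V →ₗ[R] V :=
  mk₂ R (fun x u => B x ∘ₗ B u - B (B x u) + B.flip u ∘ₗ B x)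
    (by intros; ext; simp only [map_add, add_apply, sub_apply, comp_apply, flip_apply]; abel)
    (by intros; ext; simp only [map_smul, smul_apply, sub_apply, add_apply, comp_apply,
      flip_apply, smul_sub, smul_add])
    (by intros; ext; simp only [map_add, add_apply, sub_apply, comp_apply, flip_apply]; abel)
    (by intros; ext; simp only [map_smul, smul_apply, sub_apply, add_apply, comp_apply,
      flip_apply, smul_sub, smul_add])

theorem leibnizDefect_apply (B : V →ₗ[R] V →ₗ[R] V) (x u z : V) :
    leibnizDefect B x u z = B x (B u z) - B (B x u) z + B (B x z) u := by
  simp [leibnizDefect]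

theorem leibniz_of_span {ι : Type*} {s : ι → V} (hs : Submodule.span R (Set.range s) = ⊤)
    (B : V →ₗ[R] V →ₗ[R] V)
    (h : ∀ i j k, B (s i) (B (s j) (s k)) = B (B (s i) (s j)) (s k) - B (B (s i) (s k)) (s j))
    (x u z : V) : B x (B u z) = B (B x u) z - B (B x z) u := by
  have hzero : leibnizDefect B = 0 :=
    ext_on_range hs fun i => ext_on_range hs fun j => ext_on_range hs fun k => by
      rw [leibnizDefect_apply, h, zero_apply, zero_apply, zero_apply]; abel
  rw [← sub_eq_zero, ← sub_add]
  simpa only [leibnizDefect_apply, zero_apply] using congr($hzero x u z)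

end LinearMap

section M3

variable {R V : Type*} [CommRing R] [AddCommGroup V] [Module R V]

structure IsM3Bracket (n : ℕ) (y : ℕ → V) (B : V →ₗ[R] V →ₗ[R] V) : Prop where
  bracket_one : ∀ i, 1 ≤ i → i ≤ n - 2 → B (y i) (y 1) = y (i + 1)
  bracket_last : B (y n) (y n) = y (n - 1)
  bracket_eq_zero : ∀ i j, 1 ≤ i → i ≤ n → 1 ≤ j → j ≤ n →
    ¬(j = 1 ∧ i ≤ n - 2) → ¬(i = n ∧ j = n) → B (y i) (y j) = 0

namespace IsM3Bracket

variable {n : ℕ} {y : ℕ → V} {B : V →ₗ[R] V →ₗ[R] V}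

theorem apply_apply_eq_zero (hB : IsM3Bracket n y B) (hn : 2 ≤ n) {a b c : ℕ}
    (ha : 1 ≤ a) (ha' : a ≤ n) (hb : 1 ≤ b) (hb' : b ≤ n) (hc : 1 ≤ c) (hc' : c ≤ n) :
    B (y a) (B (y b) (y c)) = 0 := by
  by_cases hone : c = 1 ∧ b ≤ n - 2
  · obtain ⟨rfl, hbn⟩ := hone
    rw [hB.bracket_one b hb hbn, hB.bracket_eq_zero a (b + 1)] <;> omega
  by_cases hlast : b = n ∧ c = n
  · rw [hlast.1, hlast.2, hB.bracket_last, hB.bracket_eq_zero a (n - 1)] <;> omega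
  rw [hB.bracket_eq_zero b c hb hb' hc hc' hone hlast, map_zero]

theorem apply_apply_eq_zero_of_not_one (hB : IsM3Bracket n y B) (hn : 2 ≤ n) {a b c : ℕ}
    (ha : 1 ≤ a) (ha' : a ≤ n) (hb : 1 ≤ b) (hb' : b ≤ n) (hc : 1 ≤ c) (hc' : c ≤ n)
    (hbc : ¬(b = 1 ∧ c = 1)) : B (B (y a) (y b)) (y c) = 0 := by
  by_cases hone : b = 1 ∧ a ≤ n - 2
  · obtain ⟨rfl, han⟩ := hone
    rw [hB.bracket_one a ha han, hB.bracket_eq_zero (a + 1) c] <;> omega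
  by_cases hlast : a = n ∧ b = n
  · rw [hlast.1, hlast.2, hB.bracket_last, hB.bracket_eq_zero (n - 1) c] <;> omega
  rw [hB.bracket_eq_zero a b ha ha' hb hb' hone hlast, map_zero, LinearMap.zero_apply]

theorem leibniz (hB : IsM3Bracket n y B) (hn : 2 ≤ n)
    (hspan : Submodule.span R (Set.range (fun i : Fin n => y (i.val + 1))) = ⊤) (x u z : V) :
    B x (B u z) = B (B x u) z - B (B x z) u := by
  refine LinearMap.leibniz_of_span hspan B (fun i j k => ?_) x u z
  rw [hB.apply_apply_eq_zero hn (by omega) (by omega) (by omega) (by omega) (by omega) (by omega)]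
  by_cases hjk : j.val = 0 ∧ k.val = 0
  · rw [Fin.ext (hjk.1.trans hjk.2.symm), sub_self]
  rw [hB.apply_apply_eq_zero_of_not_one hn, hB.apply_apply_eq_zero_of_not_one hn, sub_zero] <;>
    omega

end IsM3Bracket

end M3

theorem M3_is_Leibniz_general
    (n : ℕ) (hn : 3 ≤ n)
    (V : Type*) [AddCommGroup V] [Module ℂ V]
    (y : ℕ → V)
    (hspan : Submodule.span ℂ (Set.range (fun i : Fin n => y (i.val + 1))) = ⊤)
    (B : V →ₗ[ℂ] V →ₗ[ℂ] V)
    (h1 : ∀ i, 1 ≤ i → i ≤ n - 2 → B (y i) (y 1) = y (i + 1))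
    (h2 : B (y n) (y n) = y (n - 1))
    (h0 : ∀ i j, 1 ≤ i → i ≤ n → 1 ≤ j → j ≤ n →
      ¬(j = 1 ∧ i ≤ n - 2) → ¬(i = n ∧ j = n) → B (y i) (y j) = 0) :
    ∀ x u z : V, B x (B u z) = B (B x u) z - B (B x z) u :=
  (IsM3Bracket.mk h1 h2 h0).leibniz (by omega) hspan

/-- The algebra M₃: [yᵢ,y₁] = y_{i+1} for 1 ≤ i ≤ n-2, [yₙ,yₙ] = y_{n-1},
all other products of basis vectors zero.  This bracket satisfies the
Leibniz identity. -/
theorem M3_is_Leibniz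
    (n : ℕ) (hn : 3 ≤ n)
    (V : Type*) [AddCommGroup V] [Module ℂ V]
    (y : ℕ → V)
    (hindep : LinearIndependent ℂ (fun i : Fin n => y (i.val + 1)))
    (hspan : Submodule.span ℂ (Set.range (fun i : Fin n => y (i.val + 1))) = ⊤)
    (B : V →ₗ[ℂ] V →ₗ[ℂ] V)
    (h1 : ∀ i, 1 ≤ i → i ≤ n - 2 → B (y i) (y 1) = y (i + 1))
    (h2 : B (y n) (y n) = y (n - 1))
    (h0 : ∀ i j, 1 ≤ i → i ≤ n → 1 ≤ j → j ≤ n →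
      ¬(j = 1 ∧ i ≤ n - 2) → ¬(i = n ∧ j = n) → B (y i) (y j) = 0) :
    ∀ x u z : V, B x (B u z) = B (B x u) z - B (B x z) u :=
  M3_is_Leibniz_general n hn V y hspan B h1 h2 h0
end

section
/- The n-dimensional Leibniz algebra NGF₁ (with [e₁,e₁] = e₃, [eᵢ,e₁] = e_{i+1} for 2 ≤ i ≤ n-1, other products zero) admits a connected ℤ-gradation of length n: setting V_{-1} = span{e₁ - e₂}, V_{n-2} = span{e₂}, and Vᵢ = span{e_{n-i}} for 0 ≤ i ≤ n-3, one has L = V_{-1} ⊕ V₀ ⊕ ⋯ ⊕ V_{n-2} with [Vᵢ, Vⱼ] ⊆ V_{i+j} for all i, j. -/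
/-!
In the basis `f₀ = e₁ - e₂`, `fₖ = eₖ₊₁` (`1 ≤ k ≤ n - 1`) the given subspaces are the lines
`W (deg fₖ) = span {fₖ}` with `deg f₀ = -1`, `deg fₖ = n - 1 - k`, so they form a direct sum
decomposition. Since `[e₁, e₁] = [e₂, e₁] = e₃`, the vector `f₀` squares to zero, and the only
nonzero brackets of basis vectors are `[fₖ, f₀] = fₖ₊₁`, for which
`deg fₖ₊₁ = deg fₖ + deg f₀`. Bilinearity extends this to the lines.
-/

open Submodule Set Function

section GradedBasis

variable {R M ι A : Type*} [CommSemiring R] [AddCommMonoid M] [Module R M]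
  {b : ι → M} {d : ι → A} {W : A → Submodule R M}

theorem iSup_eq_top_of_span_eq_top (hspan : span R (range b) = ⊤)
    (hWd : ∀ k, W (d k) = R ∙ b k) : iSup W = ⊤ := by
  refine top_unique (hspan ▸ span_le.mpr ?_)
  rintro _ ⟨k, rfl⟩
  exact le_iSup W (d k) (hWd k ▸ mem_span_singleton_self (b k))

theorem iSupIndep_of_linearIndependent {R M : Type*} [Ring R] [AddCommGroup M] [Module R M]
    {b : ι → M} {W : A → Submodule R M} (hli : LinearIndependent R b)
    (hWd : ∀ k, W (d k) = R ∙ b k) (hWbot : ∀ i ∉ range d, W i = ⊥) : iSupIndep W := by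
  intro i
  by_cases hi : i ∈ range d
  · obtain ⟨k, rfl⟩ := hi
    rw [hWd k]
    refine (hli.iSupIndep_span_singleton k).mono_right (iSup₂_le fun j hj => ?_)
    by_cases hj' : j ∈ range d
    · obtain ⟨l, rfl⟩ := hj'
      exact hWd l ▸ le_iSup₂_of_le l (fun h => hj (congrArg d h)) le_rfl
    · exact hWbot j hj' ▸ bot_le
  · exact hWbot i hi ▸ disjoint_bot_left

theorem bracket_mem_of_bracket_basis_mem [Add A] {B : M →ₗ[R] M →ₗ[R] M}
    (hWd : ∀ k, W (d k) = R ∙ b k) (hWbot : ∀ i ∉ range d, W i = ⊥)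
    (hB : ∀ k l, B (b k) (b l) ∈ W (d k + d l)) :
    ∀ i j, ∀ x ∈ W i, ∀ z ∈ W j, B x z ∈ W (i + j) := by
  intro i j x hx z hz
  by_cases hi : i ∈ range d
  · by_cases hj : j ∈ range d
    · obtain ⟨k, rfl⟩ := hi
      obtain ⟨l, rfl⟩ := hj
      rw [hWd k, mem_span_singleton] at hx
      rw [hWd l, mem_span_singleton] at hz
      obtain ⟨c, rfl⟩ := hx
      obtain ⟨c', rfl⟩ := hz
      simpa only [map_smul, LinearMap.smul_apply] using
        (W _).smul_mem c' ((W _).smul_mem c (hB k l))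
    · rw [hWbot j hj, mem_bot] at hz
      simp [hz]
  · rw [hWbot i hi, mem_bot] at hx
    simp [hx]

end GradedBasis

namespace NGF1

variable {R V : Type*} [CommRing R] [AddCommGroup V] [Module R V]
  {n : ℕ} {e : ℕ → V} {B : V →ₗ[R] V →ₗ[R] V}

structure IsBracketTable (n : ℕ) (e : ℕ → V) (B : V →ₗ[R] V →ₗ[R] V) : Prop where
  one_one : B (e 1) (e 1) = e 3
  succ : ∀ i, 2 ≤ i → i ≤ n - 1 → B (e i) (e 1) = e (i + 1)
  eq_zero : ∀ i j, 1 ≤ i → i ≤ n → 1 ≤ j → j ≤ n →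
    ¬(i = 1 ∧ j = 1) → ¬(j = 1 ∧ 2 ≤ i ∧ i ≤ n - 1) → B (e i) (e j) = 0

def gradedBasis (e : ℕ → V) (k : ℕ) : V := if k = 0 then e 1 - e 2 else e (k + 1)

def degree (n k : ℕ) : ℤ := if k = 0 then -1 else n - 1 - k

namespace IsBracketTable

theorem bracket_eq_zero_of_two_le (hB : IsBracketTable n e B) {a b : ℕ} (ha : 1 ≤ a)
    (ha' : a ≤ n) (hb : 2 ≤ b) (hb' : b ≤ n) : B (e a) (e b) = 0 :=
  hB.eq_zero a b ha ha' (by omega) hb' (by omega) (by omega)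

theorem bracket_gradedBasis_zero (hB : IsBracketTable n e B) {k : ℕ} (hk : 1 ≤ k)
    (hkn : k + 1 < n) : B (gradedBasis e k) (gradedBasis e 0) = gradedBasis e (k + 1) := by
  simp only [gradedBasis, if_true, if_neg (Nat.add_one_ne_zero k), if_neg (show k ≠ 0 by omega),
    map_sub, hB.succ (k + 1) (by omega) (by omega),
    hB.bracket_eq_zero_of_two_le (a := k + 1) (b := 2) (by omega) (by omega) le_rfl (by omega),
    sub_zero]

theorem bracket_gradedBasis_eq_zero (hB : IsBracketTable n e B) (hn : 3 ≤ n) {k l : ℕ}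
    (hk : k < n) (hl : l < n) (hkl : ¬(l = 0 ∧ 1 ≤ k ∧ k + 1 < n)) :
    B (gradedBasis e k) (gradedBasis e l) = 0 := by
  have hzero := @hB.bracket_eq_zero_of_two_le
  rcases Nat.eq_zero_or_pos l with rfl | hl0
  · rcases Nat.eq_zero_or_pos k with rfl | hk0
    · simp only [gradedBasis, if_true, map_sub, LinearMap.sub_apply, hB.one_one,
        hB.succ 2 le_rfl (by omega), hzero le_rfl (by omega) le_rfl (by omega),
        hzero (a := 2) (by omega) (by omega) le_rfl (by omega), sub_self]
    · obtain rfl : k + 1 = n := by omega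
      simp only [gradedBasis, if_true, if_neg hk0.ne', map_sub, sub_eq_zero,
        hzero (a := k + 1) (by omega) le_rfl le_rfl (by omega),
        hB.eq_zero (k + 1) 1 (by omega) le_rfl le_rfl (by omega) (by omega) (by omega)]
  · rcases Nat.eq_zero_or_pos k with rfl | hk0
    · simp only [gradedBasis, if_true, if_neg hl0.ne', map_sub, LinearMap.sub_apply,
        hzero le_rfl (by omega) (by omega) (by omega : l + 1 ≤ n),
        hzero (a := 2) (by omega) (by omega) (by omega) (by omega : l + 1 ≤ n), sub_self]
    · simp only [gradedBasis, if_neg hl0.ne', if_neg hk0.ne']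
      exact hzero (by omega) (by omega) (by omega) (by omega)

end IsBracketTable

theorem degree_succ {k : ℕ} (hk : k ≠ 0) : degree n (k + 1) = degree n k + degree n 0 := by
  simp only [degree, if_neg hk, if_neg (Nat.add_one_ne_zero k), if_true]
  push_cast
  ring

theorem mem_range_degree {i : ℤ} (hi : -1 ≤ i) (hi' : i ≤ n - 2) :
    i ∈ range fun k : Fin n => degree n k := by
  rcases eq_or_lt_of_le hi with rfl | hi
  · exact ⟨⟨0, by omega⟩, rfl⟩
  · refine ⟨⟨(n - 1 - i).toNat, by omega⟩, ?_⟩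
    simp only [degree, if_neg (show (n - 1 - i).toNat ≠ 0 by omega)]
    omega

theorem span_range_gradedBasis (hn : 2 ≤ n)
    (hspan : span R (range fun i : Fin n => e (i + 1)) = ⊤) :
    span R (range fun k : Fin n => gradedBasis e k) = ⊤ := by
  refine top_unique (hspan ▸ span_le.mpr ?_)
  rintro _ ⟨⟨i, hi⟩, rfl⟩
  have hmem (k : Fin n) : gradedBasis e k ∈ span R (range fun k : Fin n => gradedBasis e k) :=
    subset_span ⟨k, rfl⟩
  rcases Nat.eq_zero_or_pos i with rfl | hi0
  · have h := add_mem (hmem ⟨0, hi⟩) (hmem ⟨1, hn⟩)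
    simpa [gradedBasis] using h
  · simpa [gradedBasis, hi0.ne'] using hmem ⟨i, hi⟩

theorem linearIndependent_gradedBasis [Nontrivial R] (hn : 2 ≤ n)
    (hindep : LinearIndependent R fun i : Fin n => e (i + 1))
    (hspan : span R (range fun i : Fin n => e (i + 1)) = ⊤) :
    LinearIndependent R fun k : Fin n => gradedBasis e k :=
  linearIndependent_of_top_le_span_of_card_eq_finrank (span_range_gradedBasis hn hspan).ge
    (by rw [Module.finrank_eq_card_basis (Module.Basis.mk hindep hspan.ge)])

theorem IsBracketTable.bracket_gradedBasis_mem (hB : IsBracketTable n e B) (hn : 3 ≤ n)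
    {W : ℤ → Submodule R V} (hWd : ∀ k : Fin n, W (degree n k) = R ∙ gradedBasis e k)
    (k l : Fin n) :
    B (gradedBasis e k) (gradedBasis e l) ∈ W (degree n k + degree n l) := by
  by_cases hkl : l.val = 0 ∧ 1 ≤ k.val ∧ k.val + 1 < n
  · obtain ⟨hl, hk, hkn⟩ := hkl
    rw [hl, hB.bracket_gradedBasis_zero hk hkn, ← degree_succ (by omega)]
    exact hWd ⟨k + 1, hkn⟩ ▸ mem_span_singleton_self _
  · rw [hB.bracket_gradedBasis_eq_zero hn k.isLt l.isLt hkl]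
    exact zero_mem _

end NGF1

open NGF1

/-- NGF₁ admits a connected ℤ-gradation of length n: with
V₋₁ = span{e₁ - e₂}, V_{n-2} = span{e₂}, Vᵢ = span{e_{n-i}} for 0 ≤ i ≤ n-3
(and Vᵢ = 0 otherwise), one has L = ⊕ Vᵢ with [Vᵢ,Vⱼ] ⊆ V_{i+j}. -/
theorem NGF1_maximal_length_gradation
    (n : ℕ) (hn : 3 ≤ n)
    (V : Type*) [AddCommGroup V] [Module ℂ V]
    (e : ℕ → V)
    (hindep : LinearIndependent ℂ (fun i : Fin n => e (i.val + 1)))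
    (hspan : Submodule.span ℂ (Set.range (fun i : Fin n => e (i.val + 1))) = ⊤)
    (B : V →ₗ[ℂ] V →ₗ[ℂ] V)
    (h1 : B (e 1) (e 1) = e 3)
    (h2 : ∀ i, 2 ≤ i → i ≤ n - 1 → B (e i) (e 1) = e (i + 1))
    (h0 : ∀ i j, 1 ≤ i → i ≤ n → 1 ≤ j → j ≤ n →
      ¬(i = 1 ∧ j = 1) → ¬(j = 1 ∧ 2 ≤ i ∧ i ≤ n - 1) → B (e i) (e j) = 0)
    (W : ℤ → Submodule ℂ V)
    (hWm1 : W (-1) = Submodule.span ℂ {e 1 - e 2})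
    (hWtop : W ((n : ℤ) - 2) = Submodule.span ℂ {e 2})
    (hWi : ∀ i : ℤ, 0 ≤ i → i ≤ (n : ℤ) - 3 → W i = Submodule.span ℂ {e (n - i.toNat)})
    (hWz : ∀ i : ℤ, i < -1 ∨ ((n : ℤ) - 3 < i ∧ i ≠ (n : ℤ) - 2) ∨ (n : ℤ) - 2 < i →
      W i = ⊥) :
    (iSup W = ⊤) ∧ iSupIndep W ∧
    (∀ i j : ℤ, ∀ x ∈ W i, ∀ z ∈ W j, B x z ∈ W (i + j)) := by
  have hWd (k : Fin n) : W (degree n k) = ℂ ∙ gradedBasis e k := by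
    obtain ⟨k, hk⟩ := k
    rcases Nat.lt_or_ge k 2 with hk2 | hk2
    · interval_cases k
      · simpa [degree, gradedBasis] using hWm1
      · simpa [degree, gradedBasis, sub_sub, one_add_one_eq_two] using hWtop
    · have hdeg : degree n k = n - 1 - k := if_neg (by omega)
      rw [hdeg, hWi (n - 1 - k) (by omega) (by omega), gradedBasis,
        if_neg (show k ≠ 0 by omega), show n - ((n : ℤ) - 1 - k).toNat = k + 1 by omega]
  have hWbot (i : ℤ) (hi : i ∉ range fun k : Fin n => degree n k) : W i = ⊥ := by
    refine hWz i ?_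
    by_contra! h
    exact hi (mem_range_degree (by omega) (by omega))
  have hB : IsBracketTable n e B := ⟨h1, h2, h0⟩
  exact ⟨iSup_eq_top_of_span_eq_top (span_range_gradedBasis (by omega) hspan) hWd,
    iSupIndep_of_linearIndependent (linearIndependent_gradedBasis (by omega) hindep hspan)
      hWd hWbot,
    bracket_mem_of_bracket_basis_mem hWd hWbot (hB.bracket_gradedBasis_mem hn hWd)⟩
end

section
/- For the Leibniz algebra M₁(k) (basis y₁,…,yₙ, [yᵢ,y₁] = y_{i+1} for 1 ≤ i ≤ n-2, [yᵢ,yₙ] = y_{k+i-1} for 1 ≤ i ≤ n-k, 3 ≤ k ≤ n-1, other products zero), the linear map d₀ defined by d₀(yᵢ) = i·yᵢ for 1 ≤ i ≤ n-1 and d₀(yₙ) = (k-1)·yₙ is a derivation. -/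
/-- For M₁(k), the linear map d₀ with d₀(yᵢ) = i·yᵢ (1 ≤ i ≤ n-1),
d₀(yₙ) = (k-1)·yₙ is a derivation. -/
theorem M1k_d0_is_derivation
    (n k : ℕ) (hn : 4 ≤ n) (hk3 : 3 ≤ k) (hkn : k ≤ n - 1)
    (V : Type*) [AddCommGroup V] [Module ℂ V]
    (y : ℕ → V)
    (hindep : LinearIndependent ℂ (fun i : Fin n => y (i.val + 1)))
    (hspan : Submodule.span ℂ (Set.range (fun i : Fin n => y (i.val + 1))) = ⊤)
    (B : V →ₗ[ℂ] V →ₗ[ℂ] V)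
    (h1 : ∀ i, 1 ≤ i → i ≤ n - 2 → B (y i) (y 1) = y (i + 1))
    (h2 : ∀ i, 1 ≤ i → i ≤ n - k → B (y i) (y n) = y (k + i - 1))
    (h0 : ∀ i j, 1 ≤ i → i ≤ n → 1 ≤ j → j ≤ n →
      ¬(j = 1 ∧ i ≤ n - 2) → ¬(j = n ∧ i ≤ n - k) → B (y i) (y j) = 0)
    (d0 : V →ₗ[ℂ] V)
    (hd0 : ∀ i, 1 ≤ i → i ≤ n - 1 → d0 (y i) = (i : ℂ) • y i)
    (hd0n : d0 (y n) = ((k : ℂ) - 1) • y n) :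
    ∀ x z : V, d0 (B x z) = B (d0 x) z + B x (d0 z) := by
  -- every basis vector is an eigenvector of d0
  have hd : ∀ a, 1 ≤ a → a ≤ n → ∃ s : ℂ, d0 (y a) = s • y a := by
    intro a ha1 han
    rcases eq_or_lt_of_le han with h | h
    · subst h; exact ⟨(k : ℂ) - 1, hd0n⟩
    · exact ⟨(a : ℂ), hd0 a ha1 (by omega)⟩
  have hbasis : ∀ a c, 1 ≤ a → a ≤ n → 1 ≤ c → c ≤ n →
      d0 (B (y a) (y c)) = B (d0 (y a)) (y c) + B (y a) (d0 (y c)) := by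
    intro a c ha1 han hc1 hcn
    by_cases H1 : c = 1 ∧ a ≤ n - 2
    · obtain ⟨hc, ha⟩ := H1
      subst hc
      rw [h1 a ha1 ha, hd0 (a + 1) (by omega) (by omega), hd0 a ha1 (by omega),
        hd0 1 le_rfl (by omega), map_smul, LinearMap.smul_apply, map_smul, h1 a ha1 ha]
      push_cast
      module
    · by_cases H2 : c = n ∧ a ≤ n - k
      · obtain ⟨hc, ha⟩ := H2
        subst hc
        rw [h2 a ha1 ha, hd0 (k + a - 1) (by omega) (by omega), hd0 a ha1 (by omega),
          hd0n, map_smul, LinearMap.smul_apply, map_smul, h2 a ha1 ha]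
        have : ((k + a - 1 : ℕ) : ℂ) = (k : ℂ) + (a : ℂ) - 1 := by
          push_cast [Nat.cast_sub (by omega : 1 ≤ k + a)]; ring
        rw [this]
        module
      · obtain ⟨s, hs⟩ := hd a ha1 han
        obtain ⟨t, ht⟩ := hd c hc1 hcn
        rw [h0 a c ha1 han hc1 hcn H1 H2, hs, ht, map_smul, LinearMap.smul_apply, map_smul,
          h0 a c ha1 han hc1 hcn H1 H2]
        simp
  -- bilinear map equality via the basis
  let b : Module.Basis (Fin n) ℂ V := Module.Basis.mk hindep (by rw [hspan])
  have hb : ∀ i : Fin n, b i = y (i.val + 1) := fun i => Module.Basis.mk_apply hindep _ i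
  have key : B.compr₂ d0 = (B.comp d0) + B.compl₂ d0 := by
    apply b.ext; intro i
    apply b.ext; intro j
    simp only [LinearMap.compr₂_apply, LinearMap.add_apply, LinearMap.comp_apply,
      LinearMap.compl₂_apply, hb]
    exact hbasis (i.val + 1) (j.val + 1) (by omega) (by omega) (by omega) (by omega)
  intro x z
  have := LinearMap.congr_fun (LinearMap.congr_fun key x) z
  simpa only [LinearMap.compr₂_apply, LinearMap.add_apply, LinearMap.comp_apply,
    LinearMap.compl₂_apply] using this
end

section
/- For the Leibniz algebra M₁(k), the linear maps dⱼ (1 ≤ j ≤ n-2) defined by dⱼ(yᵢ) = y_{i+j} for 1 ≤ i ≤ n-j-1 and dⱼ(yᵢ) = 0 otherwise (including dⱼ(yₙ) = 0), and h₁ defined by h₁(yₙ) = y_{n-1}, h₁(yᵢ) = 0 for i ≤ n-1, are all derivations of M₁(k). -/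
/-!
Both sides of the Leibniz rule are bilinear in the two arguments, so it suffices to check it on
pairs of basis vectors `yᵢ, yⱼ`. There the bracket, `dⱼ` and `h₁` are given by explicit case
formulas, and each case of the rule reduces to an identity or a contradiction between indices.
-/

theorem LinearMap.leibniz_of_span_s14 {R M : Type*} [CommSemiring R] [AddCommMonoid M] [Module R M]
    {s : Set M} (hs : Submodule.span R s = ⊤) (B : M →ₗ[R] M →ₗ[R] M) (D : M →ₗ[R] M)
    (H : ∀ a ∈ s, ∀ b ∈ s, D (B a b) = B (D a) b + B a (D b)) (x z : M) :
    D (B x z) = B (D x) z + B x (D z) := by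
  have key : (llcomp R M M M D).comp B = B.comp D + (lcomp R M D).comp B :=
    ext_on hs fun a ha => ext_on hs fun b hb => by simpa using H a ha b hb
  simpa using LinearMap.congr_fun (LinearMap.congr_fun key x) z

namespace M1k

variable {V : Type*} [AddCommGroup V] [Module ℂ V] {n k : ℕ} {y : ℕ → V}
  {B : V →ₗ[ℂ] V →ₗ[ℂ] V} {D : V →ₗ[ℂ] V}

theorem leibniz_of_span_basis
    (hspan : Submodule.span ℂ (Set.range (fun i : Fin n => y (i.val + 1))) = ⊤)
    (H : ∀ i j, 1 ≤ i → i ≤ n → 1 ≤ j → j ≤ n →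
      D (B (y i) (y j)) = B (D (y i)) (y j) + B (y i) (D (y j))) (x z : V) :
    D (B x z) = B (D x) z + B x (D z) := by
  refine LinearMap.leibniz_of_span_s14 hspan B D ?_ x z
  rintro _ ⟨i, rfl⟩ _ ⟨j, rfl⟩
  exact H _ _ i.val.succ_pos i.isLt j.val.succ_pos j.isLt

theorem bracket_basis
    (h1 : ∀ i, 1 ≤ i → i ≤ n - 2 → B (y i) (y 1) = y (i + 1))
    (h2 : ∀ i, 1 ≤ i → i ≤ n - k → B (y i) (y n) = y (k + i - 1))
    (h0 : ∀ i j, 1 ≤ i → i ≤ n → 1 ≤ j → j ≤ n →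
      ¬(j = 1 ∧ i ≤ n - 2) → ¬(j = n ∧ i ≤ n - k) → B (y i) (y j) = 0) :
    ∀ i j, 1 ≤ i → i ≤ n → 1 ≤ j → j ≤ n → B (y i) (y j) =
      if j = 1 ∧ i ≤ n - 2 then y (i + 1) else if j = n ∧ i ≤ n - k then y (k + i - 1) else 0 := by
  intro i j hi hin hj hjn
  split_ifs with hP1 hP2
  · exact hP1.1 ▸ h1 i hi hP1.2
  · exact hP2.1 ▸ h2 i hi hP2.2
  · exact h0 i j hi hin hj hjn hP1 hP2

theorem shift_basis {m : ℕ}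
    (hD : ∀ i, 1 ≤ i → i ≤ n - m - 1 → D (y i) = y (i + m))
    (hDz : ∀ i, 1 ≤ i → i ≤ n → ¬(i ≤ n - m - 1) → D (y i) = 0) :
    ∀ i, 1 ≤ i → i ≤ n → D (y i) = if i ≤ n - m - 1 then y (i + m) else 0 := by
  intro i hi hin
  split_ifs with h
  · exact hD i hi h
  · exact hDz i hi hin h

theorem last_to_prev_basis
    (hDn : D (y n) = y (n - 1)) (hDz : ∀ i, 1 ≤ i → i ≤ n - 1 → D (y i) = 0) :
    ∀ i, 1 ≤ i → i ≤ n → D (y i) = if i = n then y (n - 1) else 0 := by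
  intro i hi hin
  split_ifs with h
  · exact h ▸ hDn
  · exact hDz i hi (by omega)

theorem leibniz_basis_of_shift (hk : 1 ≤ k)
    (hB : ∀ i j, 1 ≤ i → i ≤ n → 1 ≤ j → j ≤ n → B (y i) (y j) =
      if j = 1 ∧ i ≤ n - 2 then y (i + 1) else if j = n ∧ i ≤ n - k then y (k + i - 1) else 0)
    {m : ℕ} (hm : 1 ≤ m) (hmn : m ≤ n - 2)
    (hD : ∀ i, 1 ≤ i → i ≤ n → D (y i) = if i ≤ n - m - 1 then y (i + m) else 0)
    {i j : ℕ} (hi : 1 ≤ i) (hin : i ≤ n) (hj : 1 ≤ j) (hjn : j ≤ n) :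
    D (B (y i) (y j)) = B (D (y i)) (y j) + B (y i) (D (y j)) := by
  rw [hB i j hi hin hj hjn, hD i hi hin, hD j hj hjn]
  split_ifs <;> simp (disch := omega) only [hB, hD, map_zero, LinearMap.zero_apply, add_zero] <;>
    split_ifs <;> (try simp only [add_zero]) <;> first | rfl | omega | (congr 1; omega)

theorem leibniz_basis_of_last_to_prev (hn : 2 ≤ n) (hk : 2 ≤ k)
    (hB : ∀ i j, 1 ≤ i → i ≤ n → 1 ≤ j → j ≤ n → B (y i) (y j) =
      if j = 1 ∧ i ≤ n - 2 then y (i + 1) else if j = n ∧ i ≤ n - k then y (k + i - 1) else 0)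
    (hD : ∀ i, 1 ≤ i → i ≤ n → D (y i) = if i = n then y (n - 1) else 0)
    {i j : ℕ} (hi : 1 ≤ i) (hin : i ≤ n) (hj : 1 ≤ j) (hjn : j ≤ n) :
    D (B (y i) (y j)) = B (D (y i)) (y j) + B (y i) (D (y j)) := by
  rw [hB i j hi hin hj hjn, hD i hi hin, hD j hj hjn]
  split_ifs <;> simp (disch := omega) only [hB, hD, map_zero, LinearMap.zero_apply, add_zero] <;>
    split_ifs <;> (try simp only [add_zero]) <;> first | rfl | omega

end M1k

theorem M1k_dj_h1_are_derivations_general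
    (n k : ℕ) (hn : 4 ≤ n) (hk3 : 3 ≤ k)
    (V : Type*) [AddCommGroup V] [Module ℂ V]
    (y : ℕ → V)
    (hspan : Submodule.span ℂ (Set.range (fun i : Fin n => y (i.val + 1))) = ⊤)
    (B : V →ₗ[ℂ] V →ₗ[ℂ] V)
    (h1 : ∀ i, 1 ≤ i → i ≤ n - 2 → B (y i) (y 1) = y (i + 1))
    (h2 : ∀ i, 1 ≤ i → i ≤ n - k → B (y i) (y n) = y (k + i - 1))
    (h0 : ∀ i j, 1 ≤ i → i ≤ n → 1 ≤ j → j ≤ n →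
      ¬(j = 1 ∧ i ≤ n - 2) → ¬(j = n ∧ i ≤ n - k) → B (y i) (y j) = 0)
    (d : ℕ → V →ₗ[ℂ] V)
    (hdj : ∀ j, 1 ≤ j → j ≤ n - 2 → ∀ i, 1 ≤ i → i ≤ n - j - 1 → d j (y i) = y (i + j))
    (hdjz : ∀ j, 1 ≤ j → j ≤ n - 2 → ∀ i, 1 ≤ i → i ≤ n → ¬(i ≤ n - j - 1) →
      d j (y i) = 0)
    (h₁ : V →ₗ[ℂ] V)
    (hh1n : h₁ (y n) = y (n - 1))
    (hh1z : ∀ i, 1 ≤ i → i ≤ n - 1 → h₁ (y i) = 0) :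
    (∀ j, 1 ≤ j → j ≤ n - 2 →
      ∀ x z : V, d j (B x z) = B (d j x) z + B x (d j z)) ∧
    (∀ x z : V, h₁ (B x z) = B (h₁ x) z + B x (h₁ z)) := by
  have hB := M1k.bracket_basis h1 h2 h0
  refine ⟨fun m hm hmn => M1k.leibniz_of_span_basis hspan fun _ _ hi hin hj hjn => ?_,
    M1k.leibniz_of_span_basis hspan fun _ _ hi hin hj hjn => ?_⟩
  · exact M1k.leibniz_basis_of_shift (by omega) hB hm hmn
      (M1k.shift_basis (hdj m hm hmn) (hdjz m hm hmn)) hi hin hj hjn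
  · exact M1k.leibniz_basis_of_last_to_prev (by omega) (by omega) hB
      (M1k.last_to_prev_basis hh1n hh1z) hi hin hj hjn

/-- For M₁(k), the maps dⱼ (1 ≤ j ≤ n-2) with dⱼ(yᵢ) = y_{i+j} for
1 ≤ i ≤ n-j-1 and dⱼ(yᵢ) = 0 otherwise, and h₁ with h₁(yₙ) = y_{n-1},
h₁(yᵢ) = 0 for i ≤ n-1, are all derivations. -/
theorem M1k_dj_h1_are_derivations
    (n k : ℕ) (hn : 4 ≤ n) (hk3 : 3 ≤ k) (hkn : k ≤ n - 1)
    (V : Type*) [AddCommGroup V] [Module ℂ V]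
    (y : ℕ → V)
    (hindep : LinearIndependent ℂ (fun i : Fin n => y (i.val + 1)))
    (hspan : Submodule.span ℂ (Set.range (fun i : Fin n => y (i.val + 1))) = ⊤)
    (B : V →ₗ[ℂ] V →ₗ[ℂ] V)
    (h1 : ∀ i, 1 ≤ i → i ≤ n - 2 → B (y i) (y 1) = y (i + 1))
    (h2 : ∀ i, 1 ≤ i → i ≤ n - k → B (y i) (y n) = y (k + i - 1))
    (h0 : ∀ i j, 1 ≤ i → i ≤ n → 1 ≤ j → j ≤ n →
      ¬(j = 1 ∧ i ≤ n - 2) → ¬(j = n ∧ i ≤ n - k) → B (y i) (y j) = 0)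
    (d : ℕ → V →ₗ[ℂ] V)
    (hdj : ∀ j, 1 ≤ j → j ≤ n - 2 → ∀ i, 1 ≤ i → i ≤ n - j - 1 → d j (y i) = y (i + j))
    (hdjz : ∀ j, 1 ≤ j → j ≤ n - 2 → ∀ i, 1 ≤ i → i ≤ n → ¬(i ≤ n - j - 1) →
      d j (y i) = 0)
    (h₁ : V →ₗ[ℂ] V)
    (hh1n : h₁ (y n) = y (n - 1))
    (hh1z : ∀ i, 1 ≤ i → i ≤ n - 1 → h₁ (y i) = 0) :
    (∀ j, 1 ≤ j → j ≤ n - 2 →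
      ∀ x z : V, d j (B x z) = B (d j x) z + B x (d j z)) ∧
    (∀ x z : V, h₁ (B x z) = B (h₁ x) z + B x (h₁ z)) :=
  M1k_dj_h1_are_derivations_general n k hn hk3 V y hspan B h1 h2 h0 d hdj hdjz h₁ hh1n hh1z
end

section
/- For the Leibniz algebra M₁(k) with 2k-2 ≤ n-1, the space of derivations Der(M₁(k)) has dimension n, spanned by d₀ (d₀(yᵢ) = i·yᵢ for i ≤ n-1, d₀(yₙ) = (k-1)yₙ), dⱼ (dⱼ(yᵢ) = y_{i+j} for 1 ≤ i ≤ n-j-1, 1 ≤ j ≤ n-2), and h₁ (h₁(yₙ) = y_{n-1}). -/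
/-- For M₁(k) with 2k-2 ≤ n-1, Der(M₁(k)) has dimension n and is spanned by
d₀, dⱼ (1 ≤ j ≤ n-2), and h₁. -/
theorem M1k_derivations_basis
    (n k : ℕ) (hn : 4 ≤ n) (hk3 : 3 ≤ k) (hkn : k ≤ n - 1) (hk2 : 2 * k - 2 ≤ n - 1)
    (V : Type*) [AddCommGroup V] [Module ℂ V]
    (y : ℕ → V)
    (hindep : LinearIndependent ℂ (fun i : Fin n => y (i.val + 1)))
    (hspan : Submodule.span ℂ (Set.range (fun i : Fin n => y (i.val + 1))) = ⊤)
    (B : V →ₗ[ℂ] V →ₗ[ℂ] V)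
    (h1 : ∀ i, 1 ≤ i → i ≤ n - 2 → B (y i) (y 1) = y (i + 1))
    (h2 : ∀ i, 1 ≤ i → i ≤ n - k → B (y i) (y n) = y (k + i - 1))
    (h0 : ∀ i j, 1 ≤ i → i ≤ n → 1 ≤ j → j ≤ n →
      ¬(j = 1 ∧ i ≤ n - 2) → ¬(j = n ∧ i ≤ n - k) → B (y i) (y j) = 0)
    (D : Submodule ℂ (V →ₗ[ℂ] V))
    (hD : ∀ d : V →ₗ[ℂ] V, d ∈ D ↔ ∀ x z : V, d (B x z) = B (d x) z + B x (d z))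
    (d0 : V →ₗ[ℂ] V)
    (hd0 : ∀ i, 1 ≤ i → i ≤ n - 1 → d0 (y i) = (i : ℂ) • y i)
    (hd0n : d0 (y n) = ((k : ℂ) - 1) • y n)
    (d : ℕ → V →ₗ[ℂ] V)
    (hdj : ∀ j, 1 ≤ j → j ≤ n - 2 → ∀ i, 1 ≤ i → i ≤ n - j - 1 → d j (y i) = y (i + j))
    (hdjz : ∀ j, 1 ≤ j → j ≤ n - 2 → ∀ i, 1 ≤ i → i ≤ n → ¬(i ≤ n - j - 1) →
      d j (y i) = 0)
    (h₁ : V →ₗ[ℂ] V)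
    (hh1n : h₁ (y n) = y (n - 1))
    (hh1z : ∀ i, 1 ≤ i → i ≤ n - 1 → h₁ (y i) = 0) :
    Module.finrank ℂ D = n ∧
    D = Submodule.span ℂ ({d0, h₁} ∪ d '' {j | 1 ≤ j ∧ j ≤ n - 2}) := by
  have hn0 : 0 < n := by omega
  set S : Set (V →ₗ[ℂ] V) := {d0, h₁} ∪ d '' {j | 1 ≤ j ∧ j ≤ n - 2} with hS
  set bb : Module.Basis (Fin n) ℂ V := Module.Basis.mk hindep (le_of_eq hspan.symm) with hbbdef
  have hbb : ∀ i : Fin n, bb i = y (i.val + 1) := fun i => Module.Basis.mk_apply _ _ i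
  have idxlt : ∀ m : ℕ, (m - 1) % n < n := fun m => Nat.mod_lt _ hn0
  set idx : ℕ → Fin n := fun m => ⟨(m - 1) % n, idxlt m⟩ with hidx
  have hyidx : ∀ m, 1 ≤ m → m ≤ n → bb (idx m) = y m := by
    intro m hm1 hmn
    rw [hbb]
    have hmod : (m - 1) % n = m - 1 := Nat.mod_eq_of_lt (by omega)
    have : (idx m).val = m - 1 := hmod
    rw [this]
    congr 1
    omega
  have coordy : ∀ p m : ℕ, 1 ≤ p → p ≤ n → 1 ≤ m → m ≤ n →
      bb.coord (idx p) (y m) = if m = p then 1 else 0 := by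
    intro p m hp1 hpn hm1 hmn
    have hmodm : (m - 1) % n = m - 1 := Nat.mod_eq_of_lt (by omega)
    have hmodp : (p - 1) % n = p - 1 := Nat.mod_eq_of_lt (by omega)
    have hiff : (idx m = idx p) ↔ m = p := by
      constructor
      · intro hc
        have := congrArg Fin.val hc
        simp only [hidx] at this
        omega
      · intro hc; rw [hc]
    rw [← hyidx m hm1 hmn, Module.Basis.coord_apply, Module.Basis.repr_self, Finsupp.single_apply,
      if_congr hiff rfl rfl]
  have ext1 : ∀ (s : ℂ) (p : ℕ), 1 ≤ p → p ≤ n → s • y p = 0 → s = 0 := by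
    intro s p hp1 hpn hs
    have := congrArg (bb.coord (idx p)) hs
    rw [map_smul, map_zero, coordy p p hp1 hpn hp1 hpn, if_pos rfl, smul_eq_mul, mul_one] at this
    exact this
  have ext2 : ∀ (s t : ℂ) (p q : ℕ), 1 ≤ p → p ≤ n → 1 ≤ q → q ≤ n → p ≠ q →
      s • y p = t • y q → s = 0 ∧ t = 0 := by
    intro s t p q hp1 hpn hq1 hqn hpq hst
    constructor
    · have := congrArg (bb.coord (idx p)) hst
      rw [map_smul, map_smul, coordy p p hp1 hpn hp1 hpn,
        coordy p q hp1 hpn hq1 hqn, if_pos rfl, if_neg (Ne.symm hpq)] at this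
      simpa using this
    · have := congrArg (bb.coord (idx q)) hst
      rw [map_smul, map_smul, coordy q p hq1 hqn hp1 hpn,
        coordy q q hq1 hqn hq1 hqn, if_pos rfl, if_neg hpq] at this
      simpa using this.symm
  have hBn : ∀ v, B (y n) v = 0 := by
    have h' : B (y n) = 0 := by
      apply bb.ext
      intro i
      have hi := i.isLt
      simp only [LinearMap.zero_apply, hbb]
      exact h0 n (i.val + 1) (by omega) le_rfl (by omega) (by omega) (by omega) (by omega)
    intro v; rw [h']; rfl
  have hBmid : ∀ q, 2 ≤ q → q ≤ n - 1 → ∀ w, B w (y q) = 0 := by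
    intro q hq2 hq1
    have hf : B.flip (y q) = 0 := by
      apply bb.ext
      intro i
      have hi := i.isLt
      simp only [LinearMap.flip_apply, LinearMap.zero_apply, hbb]
      exact h0 (i.val + 1) q (by omega) (by omega) (by omega) (by omega) (by omega) (by omega)
    intro w
    have : B.flip (y q) w = 0 := by rw [hf]; rfl
    simpa using this
  have derext : ∀ g : V →ₗ[ℂ] V,
      (∀ p q : ℕ, 1 ≤ p → p ≤ n → 1 ≤ q → q ≤ n →
        g (B (y p) (y q)) = B (g (y p)) (y q) + B (y p) (g (y q))) → g ∈ D := by
    intro g hg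
    rw [hD]
    have heq : B.compr₂ g = B.comp g + B.compl₂ g := by
      apply LinearMap.ext_basis bb bb
      intro i j
      have hi := i.isLt; have hj := j.isLt
      simp only [LinearMap.compr₂_apply, LinearMap.add_apply, LinearMap.compl₂_apply,
        LinearMap.comp_apply, hbb]
      exact hg (i.val + 1) (j.val + 1) (by omega) (by omega) (by omega) (by omega)
    intro x z
    have h' := LinearMap.congr_fun (LinearMap.congr_fun heq x) z
    simpa only [LinearMap.compr₂_apply, LinearMap.add_apply, LinearMap.compl₂_apply,
      LinearMap.comp_apply] using h'
  -- d0 is a derivation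
  have hd0sc : ∀ p, 1 ≤ p → p ≤ n → ∃ c : ℂ, d0 (y p) = c • y p := by
    intro p hp1 hpn
    by_cases hp : p ≤ n - 1
    · exact ⟨p, hd0 p hp1 hp⟩
    · have hpn' : p = n := by omega
      rw [hpn']; exact ⟨_, hd0n⟩
  have hd0D : d0 ∈ D := by
    apply derext
    intro p q hp1 hpn hq1 hqn
    obtain ⟨cp, hcp⟩ := hd0sc p hp1 hpn
    obtain ⟨cq, hcq⟩ := hd0sc q hq1 hqn
    by_cases hq : q = 1
    · subst hq
      by_cases hple : p ≤ n - 2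
      · rw [h1 p hp1 hple, hd0 (p+1) (by omega) (by omega), hd0 p hp1 (by omega),
          hd0 1 le_rfl (by omega)]
        simp only [map_smul, LinearMap.smul_apply]
        rw [h1 p hp1 hple]
        push_cast
        module
      · rw [h0 p 1 hp1 hpn (by omega) (by omega) (by omega) (by omega), hcp,
          hd0 1 le_rfl (by omega), map_zero]
        simp [map_smul, LinearMap.smul_apply,
          h0 p 1 hp1 hpn (by omega) (by omega) (by omega) (by omega)]
    · by_cases hq' : q = n
      · subst q
        by_cases hpk : p ≤ n - k
        · rw [h2 p hp1 hpk, hd0 (k+p-1) (by omega) (by omega), hd0 p hp1 (by omega), hd0n]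
          simp only [map_smul, LinearMap.smul_apply]
          rw [h2 p hp1 hpk]
          rw [Nat.cast_sub (by omega : 1 ≤ k + p)]
          push_cast
          module
        · rw [h0 p n hp1 hpn (by omega) le_rfl (by omega) (by omega), hcp, hd0n, map_zero]
          simp [map_smul, LinearMap.smul_apply,
            h0 p n hp1 hpn (by omega) le_rfl (by omega) (by omega)]
      · rw [hBmid q (by omega) (by omega) (y p), hcq, map_zero]
        simp [map_smul, hBmid q (by omega) (by omega)]
  -- each d j is a derivation
  have hdjD : ∀ j, 1 ≤ j → j ≤ n - 2 → d j ∈ D := by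
    intro j hj1 hj2
    apply derext
    intro p q hp1 hpn hq1 hqn
    by_cases hq : q = 1
    · subst hq
      have hd1 : d j (y 1) = y (1 + j) := hdj j hj1 hj2 1 le_rfl (by omega)
      have hsnd : B (y p) (d j (y 1)) = 0 := by
        rw [hd1]; exact hBmid (1+j) (by omega) (by omega) _
      by_cases hple : p ≤ n - 2
      · rw [h1 p hp1 hple, hsnd, add_zero]
        by_cases hp' : p ≤ n - j - 2
        · rw [hdj j hj1 hj2 (p+1) (by omega) (by omega), hdj j hj1 hj2 p hp1 (by omega),
            h1 (p+j) (by omega) (by omega)]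
          congr 1; omega
        · rw [hdjz j hj1 hj2 (p+1) (by omega) (by omega) (by omega)]
          by_cases hp'' : p ≤ n - j - 1
          · rw [hdj j hj1 hj2 p hp1 hp'',
              h0 (p+j) 1 (by omega) (by omega) (by omega) (by omega) (by omega) (by omega)]
          · rw [hdjz j hj1 hj2 p hp1 (by omega) hp'']
            simp
      · rw [h0 p 1 hp1 hpn (by omega) (by omega) (by omega) (by omega),
          hdjz j hj1 hj2 p hp1 hpn (by omega), hsnd, map_zero]
        simp
    · by_cases hq' : q = n
      · subst q
        have hdn : d j (y n) = 0 := hdjz j hj1 hj2 n (by omega) le_rfl (by omega)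
        rw [hdn, map_zero]
        by_cases hpk : p ≤ n - k
        · rw [h2 p hp1 hpk]
          by_cases hp' : p ≤ n - k - j
          · rw [hdj j hj1 hj2 (k+p-1) (by omega) (by omega), hdj j hj1 hj2 p hp1 (by omega),
              h2 (p+j) (by omega) (by omega), add_zero]
            congr 1; omega
          · rw [hdjz j hj1 hj2 (k+p-1) (by omega) (by omega) (by omega), add_zero]
            by_cases hp'' : p ≤ n - j - 1
            · rw [hdj j hj1 hj2 p hp1 hp'',
                h0 (p+j) n (by omega) (by omega) (by omega) le_rfl (by omega) (by omega)]
            · rw [hdjz j hj1 hj2 p hp1 (by omega) hp'']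
              simp
        · rw [h0 p n hp1 hpn (by omega) le_rfl (by omega) (by omega), map_zero, add_zero]
          by_cases hp'' : p ≤ n - j - 1
          · rw [hdj j hj1 hj2 p hp1 hp'',
              h0 (p+j) n (by omega) (by omega) (by omega) le_rfl (by omega) (by omega)]
          · rw [hdjz j hj1 hj2 p hp1 (by omega) hp'']
            simp
      · rw [hBmid q (by omega) (by omega) (y p), map_zero, hBmid q (by omega) (by omega) (d j (y p)),
          zero_add]
        by_cases hq'' : q ≤ n - j - 1
        · rw [hdj j hj1 hj2 q hq1 hq'']
          exact (hBmid (q+j) (by omega) (by omega) (y p)).symm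
        · rw [hdjz j hj1 hj2 q hq1 hqn hq'']
          simp
  -- h₁ is a derivation
  have hh1D : h₁ ∈ D := by
    apply derext
    intro p q hp1 hpn hq1 hqn
    by_cases hq : q = 1
    · subst hq
      have hsnd : h₁ (y 1) = 0 := hh1z 1 le_rfl (by omega)
      by_cases hple : p ≤ n - 2
      · rw [h1 p hp1 hple, hh1z (p+1) (by omega) (by omega), hh1z p hp1 (by omega), hsnd]
        simp
      · rw [h0 p 1 hp1 hpn (by omega) (by omega) (by omega) (by omega), hsnd, map_zero]
        by_cases hp : p = n
        · subst p
          rw [hh1n, h0 (n-1) 1 (by omega) (by omega) (by omega) (by omega) (by omega) (by omega)]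
          simp
        · rw [hh1z p hp1 (by omega)]
          simp
    · by_cases hq' : q = n
      · subst q
        rw [hh1n, hBmid (n-1) (by omega) (by omega) (y p)]
        by_cases hpk : p ≤ n - k
        · rw [h2 p hp1 hpk, hh1z (k+p-1) (by omega) (by omega), hh1z p hp1 (by omega)]
          simp
        · rw [h0 p n hp1 hpn (by omega) le_rfl (by omega) (by omega), map_zero, add_zero]
          by_cases hp : p = n
          · subst p
            rw [hh1n,
              h0 (n-1) n (by omega) (by omega) (by omega) le_rfl (by omega) (by omega)]
          · rw [hh1z p hp1 (by omega)]
            simp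
      · rw [hBmid q (by omega) (by omega) (y p), hh1z q hq1 (by omega), map_zero,
          hBmid q (by omega) (by omega) (h₁ (y p))]
        simp
  have hSD : Submodule.span ℂ S ≤ D := by
    rw [Submodule.span_le]
    intro g hg
    simp only [hS, Set.mem_union, Set.mem_insert_iff, Set.mem_singleton_iff, Set.mem_image,
      Set.mem_setOf_eq] at hg
    rcases hg with (rfl | rfl) | ⟨j, ⟨hj1', hj2'⟩, rfl⟩
    · exact hd0D
    · exact hh1D
    · exact hdjD j hj1' hj2'
  have hn1lt : n - 1 < n := by omega
  have hn2lt : n - 2 < n := by omega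
  have h0lt : (0:ℕ) < n := hn0
  set i0 : Fin n := ⟨0, h0lt⟩ with hi0def
  set iN : Fin n := ⟨n-1, hn1lt⟩ with hiNdef
  set iM : Fin n := ⟨n-2, hn2lt⟩ with hiMdef
  have hi0v : i0.val = 0 := rfl
  have hiNv : iN.val = n - 1 := rfl
  have hiMv : iM.val = n - 2 := rfl
  -- the hard direction
  have hDS : D ≤ Submodule.span ℂ S := by
    intro dd hdd
    have hder : ∀ x z : V, dd (B x z) = B (dd x) z + B x (dd z) := (hD dd).mp hdd
    obtain ⟨a, ha⟩ : ∃ a : Fin n → ℂ, ∀ i, bb.repr (dd (y 1)) i = a i := ⟨_, fun _ => rfl⟩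
    obtain ⟨b, hb⟩ : ∃ b : Fin n → ℂ, ∀ i, bb.repr (dd (y n)) i = b i := ⟨_, fun _ => rfl⟩
    have hsuma : dd (y 1) = ∑ i, a i • y (i.val + 1) := by
      conv_lhs => rw [← Module.Basis.sum_repr bb (dd (y 1))]
      exact Finset.sum_congr rfl fun i _ => by rw [hbb, ha]
    have hsumb : dd (y n) = ∑ i, b i • bb i := by
      conv_lhs => rw [← Module.Basis.sum_repr bb (dd (y n))]
      exact Finset.sum_congr rfl fun i _ => by rw [hb]
    have hkey : ∑ i, b i • B (bb i) (y 1) = 0 := by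
      have h' := hder (y n) (y 1)
      rw [h0 n 1 (by omega) le_rfl le_rfl (by omega) (by omega) (by omega), map_zero,
        hBn (dd (y 1)), add_zero] at h'
      rw [hsumb] at h'
      rw [map_sum, LinearMap.sum_apply] at h'
      simp only [map_smul, LinearMap.smul_apply] at h'
      exact h'.symm
    have hbz : ∀ i : Fin n, i.val ≤ n - 3 → b i = 0 := by
      intro j0 hj0
      have h2' := congrArg (bb.coord (idx (j0.val + 2))) hkey
      rw [map_sum, map_zero] at h2'
      rw [Finset.sum_eq_single j0] at h2'
      · rw [map_smul, hbb, h1 (j0.val+1) (by omega) (by omega),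
          coordy (j0.val+2) (j0.val+1+1) (by omega) (by omega) (by omega) (by omega),
          if_pos (by omega), smul_eq_mul, mul_one] at h2'
        exact h2'
      · intro i _ hne
        have hi := i.isLt
        rw [map_smul, hbb]
        by_cases hile : i.val + 1 ≤ n - 2
        · rw [h1 (i.val+1) (by omega) hile,
            coordy (j0.val+2) (i.val+1+1) (by omega) (by omega) (by omega) (by omega),
            if_neg (by intro hc; exact hne (Fin.ext (by omega)))]
          simp
        · rw [h0 (i.val+1) 1 (by omega) (by omega) le_rfl (by omega) (by omega) (by omega),
            map_zero]
          simp
      · intro hmem; exact absurd (Finset.mem_univ _) hmem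
    have hdyn : dd (y n) = b iM • y (n-1) + b iN • y n := by
      rw [hsumb]
      have hsub : ∑ i, b i • bb i = ∑ i ∈ ({iM, iN} : Finset (Fin n)), b i • bb i := by
        symm
        apply Finset.sum_subset (Finset.subset_univ _)
        intro i _ hi
        simp only [Finset.mem_insert, Finset.mem_singleton] at hi
        push_neg at hi
        have hiv1 : i.val ≠ n - 2 := fun h => hi.1 (by rw [hiMdef]; exact Fin.ext h)
        have hiv2 : i.val ≠ n - 1 := fun h => hi.2 (by rw [hiNdef]; exact Fin.ext h)
        have hilt := i.isLt
        rw [hbz i (by omega), zero_smul]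
      rw [hsub, Finset.sum_pair (by rw [hiMdef, hiNdef]; intro hc; have := congrArg Fin.val hc; simp only [] at this; omega)]
      have e1 : bb iM = y (n-1) := by rw [hbb, hiMv]; congr 1; omega
      have e2 : bb iN = y n := by rw [hbb, hiNv]; congr 1; omega
      rw [e1, e2]
    -- the candidate combination
    set d' : V →ₗ[ℂ] V :=
      a i0 • d0 + (∑ i : Fin n, if 1 ≤ i.val ∧ i.val ≤ n - 2 then a i • d i.val else 0)
        + b iM • h₁ with hd'
    have hd'S : d' ∈ Submodule.span ℂ S := by
      apply Submodule.add_mem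
      apply Submodule.add_mem
      · exact Submodule.smul_mem _ _ (Submodule.subset_span
          (Set.mem_union_left _ (Set.mem_insert _ _)))
      · apply Submodule.sum_mem
        intro i _
        split_ifs with h
        · exact Submodule.smul_mem _ _ (Submodule.subset_span
            (Set.mem_union_right _ ⟨i.val, ⟨h.1, h.2⟩, rfl⟩))
        · exact Submodule.zero_mem _
      · exact Submodule.smul_mem _ _ (Submodule.subset_span
          (Set.mem_union_left _ (Set.mem_insert_of_mem _ rfl)))
    have hd'D : d' ∈ D := hSD hd'S
    have hd'y1 : d' (y 1) = ∑ i : Fin n, (if i.val ≤ n - 2 then a i • y (i.val + 1) else 0) := by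
      rw [hd']
      simp only [LinearMap.add_apply, LinearMap.smul_apply, LinearMap.sum_apply,
        apply_ite (fun F : V →ₗ[ℂ] V => F (y 1)), LinearMap.zero_apply]
      rw [hh1z 1 le_rfl (by omega), smul_zero, add_zero, hd0 1 le_rfl (by omega)]
      have e0 : a i0 • (((1:ℕ):ℂ) • y 1) = ∑ i : Fin n, if i = i0 then a i • y (i.val + 1) else 0 := by
        rw [Finset.sum_ite_eq' Finset.univ i0 (fun i => a i • y (i.val + 1)),
          if_pos (Finset.mem_univ _)]
        norm_num
      rw [e0, ← Finset.sum_add_distrib]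
      apply Finset.sum_congr rfl
      intro i _
      have hilt := i.isLt
      by_cases hi00 : i = i0
      · have hiv : i.val = 0 := by rw [hi00]
        rw [if_pos hi00, if_neg (by omega), add_zero, if_pos (by omega)]
      · have hiv : i.val ≠ 0 := fun h => hi00 (Fin.ext (by omega))
        rw [if_neg hi00, zero_add]
        by_cases hile : i.val ≤ n - 2
        · rw [if_pos ⟨by omega, hile⟩, if_pos hile,
            hdj i.val (by omega) hile 1 le_rfl (by omega), Nat.add_comm 1 i.val]
        · rw [if_neg (by omega), if_neg hile]
    have hey1 : dd (y 1) - d' (y 1) = a iN • y n := by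
      rw [hsuma, hd'y1, ← Finset.sum_sub_distrib]
      rw [Finset.sum_eq_single iN]
      · rw [if_neg (by omega), sub_zero, hiNv, show n - 1 + 1 = n from by omega]
      · intro i _ hne
        have hilt := i.isLt
        have hiv : i.val ≠ n - 1 := fun h => hne (Fin.ext (by rw [h, hiNv]))
        rw [if_pos (by omega), sub_self]
      · intro hmem; exact absurd (Finset.mem_univ _) hmem
    have hd'yn : d' (y n) = (((k:ℂ) - 1) * a i0) • y n + b iM • y (n-1) := by
      rw [hd']
      simp only [LinearMap.add_apply, LinearMap.smul_apply, LinearMap.sum_apply,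
        apply_ite (fun F : V →ₗ[ℂ] V => F (y n)), LinearMap.zero_apply]
      rw [hd0n, hh1n]
      have hz : ∀ i : Fin n, (if 1 ≤ i.val ∧ i.val ≤ n - 2 then a i • d i.val (y n) else 0) = 0 := by
        intro i
        split_ifs with h
        · rw [hdjz i.val h.1 h.2 n (by omega) le_rfl (by omega), smul_zero]
        · rfl
      rw [Finset.sum_congr rfl (fun i _ => hz i), Finset.sum_const_zero, add_zero, smul_smul,
        mul_comm]
    have heyn : dd (y n) - d' (y n) = (b iN - ((k:ℂ) - 1) * a i0) • y n := by
      rw [hdyn, hd'yn, sub_smul]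
      module
    set e : V →ₗ[ℂ] V := dd - d' with hedef
    have heD : ∀ x z, e (B x z) = B (e x) z + B x (e z) :=
      (hD e).mp (Submodule.sub_mem D hdd hd'D)
    set α : ℂ := a iN with hα
    set β : ℂ := b iN - ((k:ℂ) - 1) * a i0 with hβ
    have he1 : e (y 1) = α • y n := by rw [hedef, LinearMap.sub_apply]; exact hey1
    have hen : e (y n) = β • y n := by rw [hedef, LinearMap.sub_apply]; exact heyn
    have chain : ∀ i, 2 ≤ i → i ≤ k → e (y i) = (((i:ℂ) - 1) * α) • y (k + i - 2) := by
      intro i hi2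
      induction i, hi2 using Nat.le_induction with
      | base =>
        intro _
        have h' := heD (y 1) (y 1)
        rw [h1 1 le_rfl (by omega), he1, map_smul, LinearMap.smul_apply, hBn (y 1), smul_zero,
          zero_add, map_smul, h2 1 le_rfl (by omega)] at h'
        rw [h', show k + 1 - 1 = k + 2 - 2 from by omega]
        norm_num
      | succ i hi2 IH =>
        intro hik1
        have hIH := IH (by omega)
        have h' := heD (y i) (y 1)
        rw [h1 i (by omega) (by omega), hIH, he1, map_smul, LinearMap.smul_apply,
          h1 (k+i-2) (by omega) (by omega), map_smul, h2 i (by omega) (by omega)] at h'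
        rw [h', show k+i-2+1 = k+i-1 from by omega, show k+(i+1)-2 = k+i-1 from by omega]
        push_cast
        module
    have hek := chain k (by omega) le_rfl
    have h'' := heD (y 1) (y n)
    rw [h2 1 le_rfl (by omega), he1, hen, map_smul, LinearMap.smul_apply, hBn (y n), smul_zero,
      zero_add, map_smul, h2 1 le_rfl (by omega), show k + 1 - 1 = k from by omega, hek] at h''
    have hres := ext2 _ _ (k+k-2) k (by omega) (by omega) (by omega) (by omega) (by omega) h''
    have hα0 : α = 0 := by
      have hk1 : ((k:ℂ) - 1) ≠ 0 := by
        have hne : (k:ℂ) ≠ 1 := by exact_mod_cast (by omega : k ≠ 1)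
        exact sub_ne_zero.mpr hne
      rcases mul_eq_zero.mp hres.1 with h | h
      · exact absurd h hk1
      · exact h
    have hβ0 : β = 0 := hres.2
    have he1' : e (y 1) = 0 := by rw [he1, hα0, zero_smul]
    have hen' : e (y n) = 0 := by rw [hen, hβ0, zero_smul]
    have hez : ∀ m, 1 ≤ m → m ≤ n → e (y m) = 0 := by
      intro m
      induction m using Nat.strong_induction_on with
      | _ m IH =>
        intro hm1 hmn
        by_cases hm1' : m = 1
        · rw [hm1']; exact he1'
        · by_cases hmn' : m = n
          · rw [hmn']; exact hen'
          · have h' := heD (y (m-1)) (y 1)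
            rw [h1 (m-1) (by omega) (by omega), show m-1+1 = m from by omega,
              IH (m-1) (by omega) (by omega) (by omega), he1'] at h'
            simpa using h'
    have hdd' : dd = d' := by
      have he0 : e = 0 := by
        apply bb.ext
        intro i
        have hilt := i.isLt
        simp only [LinearMap.zero_apply, hbb]
        exact hez (i.val + 1) (by omega) (by omega)
      have : dd - d' = 0 := by rw [← hedef]; exact he0
      exact sub_eq_zero.mp this
    rw [hdd']
    exact hd'S
  have hDeq : D = Submodule.span ℂ S := le_antisymm hDS hSD
  -- the spanning family of n derivations
  set f : Fin n → (V →ₗ[ℂ] V) :=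
    fun i => if i.val = 0 then d0 else if i.val ≤ n - 2 then d i.val else h₁ with hfdef
  have hrange : Set.range f = S := by
    ext g
    simp only [Set.mem_range, hS, Set.mem_union, Set.mem_insert_iff, Set.mem_singleton_iff,
      Set.mem_image, Set.mem_setOf_eq, hfdef]
    constructor
    · rintro ⟨i, rfl⟩
      have hilt := i.isLt
      by_cases h0' : i.val = 0
      · rw [if_pos h0']; exact Or.inl (Or.inl rfl)
      · by_cases h1' : i.val ≤ n - 2
        · rw [if_neg h0', if_pos h1']; exact Or.inr ⟨i.val, ⟨by omega, h1'⟩, rfl⟩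
        · rw [if_neg h0', if_neg h1']; exact Or.inl (Or.inr rfl)
    · rintro ((rfl | rfl) | ⟨j, ⟨hj1', hj2'⟩, rfl⟩)
      · refine ⟨⟨0, hn0⟩, ?_⟩
        rw [if_pos rfl]
      · refine ⟨⟨n-1, by omega⟩, ?_⟩
        have hv : ((⟨n-1, by omega⟩ : Fin n)).val = n - 1 := rfl
        rw [if_neg (by omega), if_neg (by omega)]
      · refine ⟨⟨j, by omega⟩, ?_⟩
        have hv : ((⟨j, by omega⟩ : Fin n)).val = j := rfl
        rw [if_neg (by omega), if_pos (by omega)]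
  have hfind : LinearIndependent ℂ f := by
    rw [Fintype.linearIndependent_iff]
    intro c hc
    have hcz : ∀ j : Fin n, j.val ≤ n - 2 → c j = 0 := by
      have h' := LinearMap.congr_fun hc (y 1)
      simp only [LinearMap.sum_apply, LinearMap.smul_apply, LinearMap.zero_apply] at h'
      have hc1 : ∑ i : Fin n, (if i.val ≤ n - 2 then c i else 0) • y (i.val + 1) = 0 := by
        rw [← h']
        apply Finset.sum_congr rfl
        intro i _
        have hilt := i.isLt
        simp only [hfdef]
        by_cases h0' : i.val = 0
        · rw [if_pos h0', if_pos (by omega), hd0 1 le_rfl (by omega), h0']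
          norm_num
        · by_cases h1' : i.val ≤ n - 2
          · rw [if_neg h0', if_pos h1', if_pos h1',
              hdj i.val (by omega) h1' 1 le_rfl (by omega), Nat.add_comm 1 i.val]
          · rw [if_neg h0', if_neg h1', if_neg h1', hh1z 1 le_rfl (by omega), smul_zero,
              zero_smul]
      have key := Fintype.linearIndependent_iff.mp hindep _ hc1
      intro j hj
      have := key j
      rwa [if_pos hj] at this
    intro i
    have hilt := i.isLt
    by_cases hile : i.val ≤ n - 2
    · exact hcz i hile
    · have h'n := LinearMap.congr_fun hc (y n)
      simp only [LinearMap.sum_apply, LinearMap.smul_apply, LinearMap.zero_apply] at h'n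
      rw [Finset.sum_eq_single i] at h'n
      · have hfi : f i (y n) = y (n-1) := by
          simp only [hfdef]
          rw [if_neg (by omega), if_neg (by omega)]
          exact hh1n
        rw [hfi] at h'n
        exact ext1 _ (n-1) (by omega) (by omega) h'n
      · intro j _ hj
        have hjlt := j.isLt
        by_cases hj0 : j.val ≤ n - 2
        · rw [hcz j hj0, zero_smul]
        · exact absurd (Fin.ext (by omega)) hj
      · intro hmem; exact absurd (Finset.mem_univ _) hmem
  constructor
  · rw [hDeq, ← hrange, finrank_span_eq_card hfind, Fintype.card_fin]
  · exact hDeq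
end

section
/- The left annihilator of the algebra M₁(k), namely {x ∈ M₁(k) : [x,y] = 0 for all y}, has dimension 2 (it is spanned by y_{n-1} and y_{k-1} - appropriate elements killing both generators); in contrast, the left annihilator of M₂ has dimension 1. Consequently M₁(k) and M₂ are not isomorphic as Leibniz algebras for any k. -/
lemma shift_coeffs {n : ℕ} {V : Type*} [AddCommGroup V] [Module ℂ V]
    (b : Module.Basis (Fin n) ℂ V) (T : V →ₗ[ℂ] V) (m : ℕ) (hmn : m < n)
    (hT : ∀ i : Fin n, T (b i) =
      if h : i.val + 1 ≤ m then b ⟨i.val + 1, lt_of_le_of_lt h hmn⟩ else 0)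
    (x : V) (hx : T x = 0) : ∀ i : Fin n, i.val + 1 ≤ m → b.repr x i = 0 := by
  intro i₀ hi₀
  have hxe : x = ∑ i, b.repr x i • b i := (b.sum_repr x).symm
  have hTx : T x = ∑ i, b.repr x i • T (b i) := by
    conv_lhs => rw [hxe]
    simp [map_sum, -Module.Basis.sum_repr]
  set j : Fin n := ⟨i₀.val + 1, lt_of_le_of_lt hi₀ hmn⟩ with hj
  have h0 : b.coord j (T x) = 0 := by rw [hx]; simp
  have h1 : b.coord j (T x) = b.repr x i₀ := by
    rw [hTx, map_sum]
    rw [Finset.sum_eq_single i₀]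
    · rw [map_smul, hT i₀, dif_pos hi₀]
      simp [Module.Basis.coord_apply, Module.Basis.repr_self, hj]
    · intro i _ hne
      rw [map_smul, hT i]
      split
      · simp only [Module.Basis.coord_apply, Module.Basis.repr_self, Finsupp.single_apply]
        rw [if_neg, smul_zero]
        intro hc
        apply hne
        apply Fin.ext
        have : i.val + 1 = i₀.val + 1 := by simpa [hj, Fin.ext_iff] using hc
        omega
      · simp
    · simp
  rw [h0] at h1; exact h1.symm

/-- The left annihilator of M₁(k) has dimension 2, while that of M₂ has
dimension 1; consequently M₁(k) and M₂ are not isomorphic as Leibniz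
algebras. -/
theorem M1k_not_isomorphic_M2
    (n k : ℕ) (hn : 4 ≤ n) (hodd : Odd n) (hk3 : 3 ≤ k) (hkn : k ≤ n - 2)
    (V₁ : Type*) [AddCommGroup V₁] [Module ℂ V₁]
    (y : ℕ → V₁)
    (hindep₁ : LinearIndependent ℂ (fun i : Fin n => y (i.val + 1)))
    (hspan₁ : Submodule.span ℂ (Set.range (fun i : Fin n => y (i.val + 1))) = ⊤)
    (B₁ : V₁ →ₗ[ℂ] V₁ →ₗ[ℂ] V₁)
    (h11 : ∀ i, 1 ≤ i → i ≤ n - 2 → B₁ (y i) (y 1) = y (i + 1))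
    (h12 : ∀ i, 1 ≤ i → i ≤ n - k → B₁ (y i) (y n) = y (k + i - 1))
    (h10 : ∀ i j, 1 ≤ i → i ≤ n → 1 ≤ j → j ≤ n →
      ¬(j = 1 ∧ i ≤ n - 2) → ¬(j = n ∧ i ≤ n - k) → B₁ (y i) (y j) = 0)
    (V₂ : Type*) [AddCommGroup V₂] [Module ℂ V₂]
    (w : ℕ → V₂)
    (hindep₂ : LinearIndependent ℂ (fun i : Fin n => w (i.val + 1)))
    (hspan₂ : Submodule.span ℂ (Set.range (fun i : Fin n => w (i.val + 1))) = ⊤)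
    (α : ℂ) (hα : α ≠ 0)
    (B₂ : V₂ →ₗ[ℂ] V₂ →ₗ[ℂ] V₂)
    (h21 : ∀ i, 1 ≤ i → i ≤ n - 2 → B₂ (w i) (w 1) = w (i + 1))
    (h22 : ∀ i, 1 ≤ i → i ≤ (n - 1) / 2 → B₂ (w i) (w n) = w ((n + 1) / 2 + i - 1))
    (h23 : B₂ (w n) (w n) = α • w (n - 1))
    (h20 : ∀ i j, 1 ≤ i → i ≤ n → 1 ≤ j → j ≤ n →
      ¬(j = 1 ∧ i ≤ n - 2) → ¬(j = n ∧ i ≤ (n - 1) / 2) → ¬(i = n ∧ j = n) →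
      B₂ (w i) (w j) = 0)
    (A₁ : Submodule ℂ V₁) (hA₁ : ∀ x, x ∈ A₁ ↔ ∀ z : V₁, B₁ x z = 0)
    (A₂ : Submodule ℂ V₂) (hA₂ : ∀ x, x ∈ A₂ ↔ ∀ z : V₂, B₂ x z = 0) :
    Module.finrank ℂ A₁ = 2 ∧ Module.finrank ℂ A₂ = 1 ∧
    ¬∃ f : V₁ ≃ₗ[ℂ] V₂, ∀ x z : V₁, f (B₁ x z) = B₂ (f x) (f z) := by
  have hn5 : 5 ≤ n := by obtain ⟨m, hm⟩ := hodd; omega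
  have hm2 : n - 2 < n := by omega
  -- bases
  let b₁ : Module.Basis (Fin n) ℂ V₁ := Module.Basis.mk hindep₁ hspan₁.ge
  have hb₁ : ∀ i : Fin n, b₁ i = y (i.val + 1) := fun i =>
    Module.Basis.mk_apply hindep₁ hspan₁.ge i
  let b₂ : Module.Basis (Fin n) ℂ V₂ := Module.Basis.mk hindep₂ hspan₂.ge
  have hb₂ : ∀ i : Fin n, b₂ i = w (i.val + 1) := fun i =>
    Module.Basis.mk_apply hindep₂ hspan₂.ge i
  -- annihilation lemmas
  have hann₁ : ∀ m, n - 1 ≤ m → m ≤ n → ∀ z, B₁ (y m) z = 0 := by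
    intro m hm1 hmn z
    have hz : B₁ (y m) = 0 := b₁.ext fun j => by
      rw [hb₁]
      simp only [LinearMap.zero_apply]
      exact h10 m (j.val + 1) (by omega) hmn (by omega) (by omega) (by omega) (by omega)
    rw [hz]; rfl
  have hann₂ : ∀ z, B₂ (w (n - 1)) z = 0 := by
    intro z
    have hz : B₂ (w (n - 1)) = 0 := b₂.ext fun j => by
      rw [hb₂]
      simp only [LinearMap.zero_apply]
      exact h20 (n - 1) (j.val + 1) (by omega) (by omega) (by omega) (by omega)
        (by omega) (by omega) (by omega)
    rw [hz]; rfl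
  -- the shift property for bracketing with the first generator
  have hT₁ : ∀ i : Fin n, B₁.flip (y 1) (b₁ i) =
      if h : i.val + 1 ≤ n - 2 then b₁ ⟨i.val + 1, lt_of_le_of_lt h hm2⟩ else 0 := by
    intro i
    rw [LinearMap.flip_apply, hb₁]
    split
    · rename_i h
      rw [h11 (i.val + 1) (by omega) h, hb₁]
    · rename_i h
      exact h10 (i.val + 1) 1 (by omega) (by omega) (by omega) (by omega)
        (by omega) (by omega)
  have hT₂ : ∀ i : Fin n, B₂.flip (w 1) (b₂ i) =
      if h : i.val + 1 ≤ n - 2 then b₂ ⟨i.val + 1, lt_of_le_of_lt h hm2⟩ else 0 := by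
    intro i
    rw [LinearMap.flip_apply, hb₂]
    split
    · rename_i h
      rw [h21 (i.val + 1) (by omega) h, hb₂]
    · rename_i h
      exact h20 (i.val + 1) 1 (by omega) (by omega) (by omega) (by omega)
        (by omega) (by omega) (by omega)
  -- names for the two distinguished basis vectors
  have hyp : y (n - 1) = b₁ ⟨n - 2, hm2⟩ := by
    rw [hb₁]; congr 1; simp only [Fin.val_mk]; omega
  have hyq : y n = b₁ ⟨n - 1, by omega⟩ := by
    rw [hb₁]; congr 1; simp only [Fin.val_mk]; omega
  have hwp : w (n - 1) = b₂ ⟨n - 2, hm2⟩ := by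
    rw [hb₂]; congr 1; simp only [Fin.val_mk]; omega
  have hwq : w n = b₂ ⟨n - 1, by omega⟩ := by
    rw [hb₂]; congr 1; simp only [Fin.val_mk]; omega
  -- A₁ = span {y (n-1), y n}
  have hA1eq : A₁ = Submodule.span ℂ (Set.range ![y (n - 1), y n]) := by
    apply le_antisymm
    · intro x hx
      have hc := shift_coeffs b₁ (B₁.flip (y 1)) (n - 2) hm2 hT₁ x
        (by rw [LinearMap.flip_apply]; exact (hA₁ x).1 hx (y 1))
      have hxe : x = ∑ i, b₁.repr x i • b₁ i := (b₁.sum_repr x).symm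
      rw [hxe]
      apply Submodule.sum_mem
      intro i _
      by_cases h : i.val + 1 ≤ n - 2
      · rw [hc i h, zero_smul]; exact Submodule.zero_mem _
      · have h' : i.val = n - 2 ∨ i.val = n - 1 := by omega
        apply Submodule.smul_mem
        apply Submodule.subset_span
        rcases h' with h' | h'
        · refine ⟨0, ?_⟩
          simp only [Matrix.cons_val_zero]
          rw [hb₁]; congr 1; omega
        · refine ⟨1, ?_⟩
          show y n = b₁ i
          rw [hb₁]; congr 1; omega
    · rw [Submodule.span_le]
      rintro v ⟨i, rfl⟩
      fin_cases i
      · exact (hA₁ _).2 (hann₁ (n - 1) le_rfl (by omega))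
      · exact (hA₁ _).2 (hann₁ n (by omega) le_rfl)
  -- A₂ = span {w (n-1)}
  have hA2eq : A₂ = Submodule.span ℂ {w (n - 1)} := by
    apply le_antisymm
    · intro x hx
      have hc := shift_coeffs b₂ (B₂.flip (w 1)) (n - 2) hm2 hT₂ x
        (by rw [LinearMap.flip_apply]; exact (hA₂ x).1 hx (w 1))
      set q : Fin n := ⟨n - 1, by omega⟩ with hq
      -- the coefficient of w n also vanishes
      have hcq : b₂.repr x q = 0 := by
        have hxe : x = ∑ i, b₂.repr x i • b₂ i := (b₂.sum_repr x).symm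
        have h0 : B₂ x (w n) = 0 := (hA₂ x).1 hx (w n)
        have hsum : B₂ x (w n) = ∑ i, b₂.repr x i • B₂ (b₂ i) (w n) := by
          conv_lhs => rw [hxe]
          simp [map_sum, -Module.Basis.sum_repr]
        rw [hsum, Finset.sum_eq_single q] at h0
        · rw [hq] at h0
          rw [show b₂ (⟨n - 1, by omega⟩ : Fin n) = w n from hwq.symm, h23, hwp,
            smul_smul] at h0
          rcases smul_eq_zero.mp h0 with h | h
          · rcases mul_eq_zero.mp h with h | h
            · rw [hq]; exact h
            · exact absurd h hα
          · exact absurd h (b₂.ne_zero _)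
        · intro i _ hne
          by_cases h : i.val + 1 ≤ n - 2
          · rw [hc i h, zero_smul]
          · have h' : i.val = n - 2 := by
              have : i.val ≠ n - 1 := fun hcon => hne (Fin.ext (by rw [hcon, hq]))
              omega
            have : b₂ i = w (n - 1) := by rw [hb₂]; congr 1; omega
            rw [this, hann₂ (w n), smul_zero]
        · simp
      have hxe : x = ∑ i, b₂.repr x i • b₂ i := (b₂.sum_repr x).symm
      rw [hxe]
      apply Submodule.sum_mem
      intro i _
      by_cases h : i.val + 1 ≤ n - 2
      · rw [hc i h, zero_smul]; exact Submodule.zero_mem _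
      · by_cases h' : i.val = n - 1
        · have : i = q := Fin.ext (by rw [h', hq])
          rw [this, hcq, zero_smul]; exact Submodule.zero_mem _
        · apply Submodule.smul_mem
          apply Submodule.subset_span
          have : b₂ i = w (n - 1) := by rw [hb₂]; congr 1; omega
          rw [this]; rfl
    · rw [Submodule.span_le]
      rintro v hv
      rw [Set.mem_singleton_iff] at hv
      subst hv
      exact (hA₂ _).2 hann₂
  -- dimension computations
  have hli₁ : LinearIndependent ℂ ![y (n - 1), y n] := by
    have heq : ![y (n - 1), y n] =
        b₁ ∘ ![⟨n - 2, hm2⟩, ⟨n - 1, by omega⟩] := by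
      funext i
      fin_cases i
      · simpa using hyp
      · simpa using hyq
    rw [heq]
    apply b₁.linearIndependent.comp
    intro a b hab
    have hv : ∀ t : Fin 2,
        ((![⟨n - 2, hm2⟩, ⟨n - 1, by omega⟩] : Fin 2 → Fin n) t).val
          = n - 2 + t.val := by
      intro t
      fin_cases t <;> simp <;> omega
    have hvv := congrArg Fin.val hab
    rw [hv a, hv b] at hvv
    exact Fin.ext (by omega)
  have hr₁ : Module.finrank ℂ A₁ = 2 := by
    rw [hA1eq, finrank_span_eq_card hli₁]
    simp
  have hwne : w (n - 1) ≠ 0 := by rw [hwp]; exact b₂.ne_zero _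
  have hr₂ : Module.finrank ℂ A₂ = 1 := by
    rw [hA2eq]
    exact finrank_span_singleton hwne
  refine ⟨hr₁, hr₂, ?_⟩
  rintro ⟨f, hf⟩
  have hmap : A₁.map (f : V₁ →ₗ[ℂ] V₂) = A₂ := by
    ext v
    constructor
    · rintro ⟨u, hu, rfl⟩
      rw [hA₂]
      intro z
      have := hf u (f.symm z)
      rw [(hA₁ u).1 hu (f.symm z), map_zero, f.apply_symm_apply] at this
      exact this.symm
    · intro hv
      refine ⟨f.symm v, ?_, f.apply_symm_apply v⟩
      rw [SetLike.mem_coe, hA₁]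
      intro z
      apply f.injective
      rw [map_zero, hf (f.symm v) z, f.apply_symm_apply]
      exact (hA₂ v).1 hv (f z)
  have := LinearEquiv.finrank_map_eq f A₁
  rw [hmap, hr₁, hr₂] at this
  omega
end
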